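/- arXiv:1405.7675 — 16 statements merged into one kernel-verified Lean document; each statement's English description precedes it below -/
import Mathlib

section
/- A vector x ∈ ℝⁿ is an AE solution to the interval system of equations Ax = b (i.e., for all A∀ ∈ A∀ and b∀ ∈ b∀ there exist A∃ ∈ A∃ and b∃ ∈ b∃ such that (A∀ + A∃)x = b∀ + b∃) if and only if |A_c x − b_c| ≤ (A∃_Δ − A∀_Δ)|x| + b∃_Δ − b∀_Δ, where the inequality and absolute value are meant entrywise. -/
/-!
The rows of the system decouple, so it suffices to treat a single equation `a ⬝ᵥ x = β`.
As `a` ranges over the box `[c - d, c + d]`, the value `a ⬝ᵥ x` sweeps the whole interval with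
center `c ⬝ᵥ x` and radius `d ⬝ᵥ |x|`: the image of a box is convex, and the endpoints are
attained at `a = c ± d * sign x`. For one row, `x` is an AE solution iff the interval of values
`β - a ⬝ᵥ x` that the universal player can force lies inside the interval of values
`a' ⬝ᵥ x - β'` that the existential player can reach, and `[c₁ ± r₁] ⊆ [c₂ ± r₂]` is
`r₁ + |c₁ - c₂| ≤ r₂`.
-/

open Matrix Set Metric Pointwise

theorem Real.closedBall_subset_closedBall_iff {a b r s : ℝ} (hr : 0 ≤ r) :
    closedBall a r ⊆ closedBall b s ↔ r + |a - b| ≤ s := by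
  rw [Real.closedBall_eq_Icc, Real.closedBall_eq_Icc, Icc_subset_Icc_iff (by linarith)]
  constructor
  · rintro ⟨h₁, h₂⟩
    linarith [abs_sub_le_iff.mpr (⟨by linarith, by linarith⟩ : a - b ≤ s - r ∧ b - a ≤ s - r)]
  · intro h
    have := abs_sub_le_iff.mp (show |a - b| ≤ s - r by linarith)
    constructor <;> linarith

theorem Pi.mem_Icc_sub_add_iff {ι R : Type*} [AddCommGroup R] [LinearOrder R]
    [IsOrderedAddMonoid R] {a c d : ι → R} :
    a ∈ Icc (c - d) (c + d) ↔ ∀ j, |a j - c j| ≤ d j := by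
  simp only [abs_sub_comm (a _), mem_Icc_iff_abs_le, mem_Icc, Pi.le_def, Pi.sub_apply,
    Pi.add_apply, forall_and]

theorem abs_dotProduct_le {ι : Type*} [Fintype ι] (v w : ι → ℝ) :
    |v ⬝ᵥ w| ≤ |v| ⬝ᵥ |w| := by
  simpa only [dotProduct, Pi.abs_apply, abs_mul] using
    Finset.abs_sum_le_sum_abs (fun j => v j * w j) Finset.univ

theorem image_dotProduct_Icc {ι : Type*} [Fintype ι] (x c d : ι → ℝ) (hd : 0 ≤ d) :
    (· ⬝ᵥ x) '' Icc (c - d) (c + d) = closedBall (c ⬝ᵥ x) (d ⬝ᵥ |x|) := by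
  refine Subset.antisymm ?_ ?_
  · rintro _ ⟨a, ha, rfl⟩
    have had : |a - c| ≤ d := Pi.mem_Icc_sub_add_iff.mp ha
    rw [mem_closedBall, Real.dist_eq, ← sub_dotProduct]
    exact (abs_dotProduct_le _ _).trans
      (dotProduct_le_dotProduct_of_nonneg_right had (abs_nonneg x))
  · set u : ι → ℝ := fun j => d j * SignType.sign (x j)
    have hu : u ⬝ᵥ x = d ⬝ᵥ |x| := by
      simp only [u, dotProduct, Pi.abs_apply, mul_assoc, sign_mul_self]
    have hud : ∀ j, |u j| ≤ d j := fun j => by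
      simp only [u, abs_mul, abs_of_nonneg (hd j)]
      exact mul_le_of_le_one_right (hd j)
        (by rcases lt_trichotomy (x j) 0 with h | h | h <;> simp [h])
    have hconv : OrdConnected ((· ⬝ᵥ x) '' Icc (c - d) (c + d)) :=
      convex_iff_ordConnected.mp <| (convex_Icc _ _).is_linear_image
        ⟨fun a b => add_dotProduct a b x, fun r a => smul_dotProduct r a x⟩
    rw [Real.closedBall_eq_Icc]
    have hmem : ∀ v : ι → ℝ, (∀ j, |v j| ≤ d j) → c + v ∈ Icc (c - d) (c + d) :=
      fun v hv => Pi.mem_Icc_sub_add_iff.mpr fun j => by simpa using hv j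
    refine hconv.out ⟨c + -u, hmem _ fun j => ?_, ?_⟩ ⟨c + u, hmem u hud, ?_⟩
    · simpa using hud j
    · simp only [add_dotProduct, neg_dotProduct, hu, sub_eq_add_neg]
    · simp only [add_dotProduct, hu]

theorem forall_exists_add_eq_add_iff_sub_subset {α : Type*} [AddCommGroup α]
    {s t u v : Set α} :
    (∀ p ∈ s, ∀ b ∈ t, ∃ q ∈ u, ∃ c ∈ v, p + q = b + c) ↔ t - s ⊆ u - v := by
  constructor
  · rintro h _ ⟨b, hb, p, hp, rfl⟩
    obtain ⟨q, hq, c, hc, heq⟩ := h p hp b hb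
    exact ⟨q, hq, c, hc, by rw [sub_eq_sub_iff_add_eq_add, add_comm q]; exact heq⟩
  · intro h p hp b hb
    obtain ⟨q, hq, c, hc, heq⟩ := h ⟨b, hb, p, hp, rfl⟩
    exact ⟨q, hq, c, hc, by rw [sub_eq_sub_iff_add_eq_add, add_comm q] at heq; exact heq⟩

theorem forall_pi_exists_pi_iff {ι α β γ δ : Type*} {s : ι → α → Prop} {t : ι → β → Prop}
    {u : ι → γ → Prop} {v : ι → δ → Prop} {R : ι → α → β → γ → δ → Prop}
    (hs : ∀ i, ∃ a, s i a) (ht : ∀ i, ∃ b, t i b) :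
    (∀ f : ι → α, (∀ i, s i (f i)) → ∀ g : ι → β, (∀ i, t i (g i)) →
      ∃ f' : ι → γ, (∀ i, u i (f' i)) ∧ ∃ g' : ι → δ, (∀ i, v i (g' i)) ∧
        ∀ i, R i (f i) (g i) (f' i) (g' i)) ↔
    ∀ i a, s i a → ∀ b, t i b → ∃ c, u i c ∧ ∃ d, v i d ∧ R i a b c d := by
  classical
  constructor
  · intro h i a ha b hb
    choose f₀ hf₀ using hs
    choose g₀ hg₀ using ht
    obtain ⟨f', hf', g', hg', hR⟩ :=
      h (Function.update f₀ i a) ((Function.forall_update_iff f₀ s).2 ⟨ha, fun k _ => hf₀ k⟩)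
        (Function.update g₀ i b) ((Function.forall_update_iff g₀ t).2 ⟨hb, fun k _ => hg₀ k⟩)
    exact ⟨f' i, hf' i, g' i, hg' i, by simpa using hR i⟩
  · intro h f hf g hg
    choose f' hf' g' hg' hR using fun i => h i (f i) (hf i) (g i) (hg i)
    exact ⟨f', hf', g', hg', hR⟩

theorem forall_exists_dotProduct_eq_iff_abs_le {ι : Type*} [Fintype ι] (x : ι → ℝ)
    {c d c' d' : ι → ℝ} {b r b' r' : ℝ} (hd : 0 ≤ d) (hd' : 0 ≤ d') (hr : 0 ≤ r)
    (hr' : 0 ≤ r') :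
    (∀ a : ι → ℝ, (∀ j, |a j - c j| ≤ d j) → ∀ β, |β - b| ≤ r →
      ∃ a' : ι → ℝ, (∀ j, |a' j - c' j| ≤ d' j) ∧ ∃ β', |β' - b'| ≤ r' ∧
        (a + a') ⬝ᵥ x = β + β') ↔
    |(c + c') ⬝ᵥ x - (b + b')| ≤ (d' - d) ⬝ᵥ |x| + (r' - r) := by
  have hdx : 0 ≤ d ⬝ᵥ |x| := dotProduct_nonneg_of_nonneg hd (abs_nonneg x)
  have hdx' : 0 ≤ d' ⬝ᵥ |x| := dotProduct_nonneg_of_nonneg hd' (abs_nonneg x)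
  have hvalues : (∀ a : ι → ℝ, (∀ j, |a j - c j| ≤ d j) → ∀ β, |β - b| ≤ r →
      ∃ a' : ι → ℝ, (∀ j, |a' j - c' j| ≤ d' j) ∧ ∃ β', |β' - b'| ≤ r' ∧
        (a + a') ⬝ᵥ x = β + β') ↔
      ∀ p ∈ (· ⬝ᵥ x) '' Icc (c - d) (c + d), ∀ β ∈ closedBall b r,
        ∃ q ∈ (· ⬝ᵥ x) '' Icc (c' - d') (c' + d'), ∃ β' ∈ closedBall b' r', p + q = β + β' := by
    simp only [forall_mem_image, exists_mem_image, add_dotProduct, Pi.mem_Icc_sub_add_iff,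
      mem_closedBall, Real.dist_eq]
  rw [hvalues, forall_exists_add_eq_add_iff_sub_subset, image_dotProduct_Icc x c d hd,
    image_dotProduct_Icc x c' d' hd', closedBall_sub_closedBall hr hdx,
    closedBall_sub_closedBall hdx' hr', Real.closedBall_subset_closedBall_iff (add_nonneg hr hdx),
    show b - c ⬝ᵥ x - (c' ⬝ᵥ x - b') = -((c + c') ⬝ᵥ x - (b + b')) by rw [add_dotProduct]; ring,
    abs_neg, sub_dotProduct]
  constructor <;> intro h <;> linarith

/-- AE solutions to interval equations `𝐀x = 𝐛` (Theorem of Shary/Rohn):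
`x` is an AE solution iff `|A_c x − b_c| ≤ (A∃_Δ − A∀_Δ)|x| + b∃_Δ − b∀_Δ`. -/
theorem ae_solution_equations_iff
    {m n : ℕ}
    (Afc Aec AfΔ AeΔ : Matrix (Fin m) (Fin n) ℝ)
    (bfc bec bfΔ beΔ : Fin m → ℝ)
    (hAfΔ : ∀ i j, 0 ≤ AfΔ i j) (hAeΔ : ∀ i j, 0 ≤ AeΔ i j)
    (hbfΔ : ∀ i, 0 ≤ bfΔ i) (hbeΔ : ∀ i, 0 ≤ beΔ i)
    (x : Fin n → ℝ) :
    (∀ Af : Matrix (Fin m) (Fin n) ℝ, (∀ i j, |Af i j - Afc i j| ≤ AfΔ i j) →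
      ∀ bf : Fin m → ℝ, (∀ i, |bf i - bfc i| ≤ bfΔ i) →
        ∃ Ae : Matrix (Fin m) (Fin n) ℝ, (∀ i j, |Ae i j - Aec i j| ≤ AeΔ i j) ∧
          ∃ be : Fin m → ℝ, (∀ i, |be i - bec i| ≤ beΔ i) ∧
            (Af + Ae).mulVec x = bf + be)
    ↔
    (∀ i, |((Afc + Aec).mulVec x) i - (bfc i + bec i)| ≤
      ((AeΔ - AfΔ).mulVec (fun j => |x j|)) i + (beΔ i - bfΔ i)) := by
  have hs : ∀ i, ∃ a : Fin n → ℝ, ∀ j, |a j - Afc i j| ≤ AfΔ i j :=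
    fun i => ⟨Afc i, by simpa using hAfΔ i⟩
  have ht : ∀ i, ∃ b : ℝ, |b - bfc i| ≤ bfΔ i := fun i => ⟨bfc i, by simpa using hbfΔ i⟩
  simp only [funext_iff]
  refine (forall_pi_exists_pi_iff (u := fun i a' => ∀ j, |a' j - Aec i j| ≤ AeΔ i j)
    (v := fun i b' => |b' - bec i| ≤ beΔ i) (R := fun _ a b a' b' => (a + a') ⬝ᵥ x = b + b')
    hs ht).trans (forall_congr' fun i => ?_)
  exact forall_exists_dotProduct_eq_iff_abs_le x (hAfΔ i) (hAeΔ i) (hbfΔ i) (hbeΔ i)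
end

section
/- A vector x ∈ ℝⁿ is an AE solution to the interval system of inequalities Ax ≤ b (i.e., for all A∀ ∈ 𝐀∀ and b∀ ∈ 𝐛∀ there exist A∃ ∈ 𝐀∃ and b∃ ∈ 𝐛∃ such that (A∀ + A∃)x ≤ b∀ + b∃) if and only if A_c x − b_c ≤ (A∃_Δ − A∀_Δ)|x| + b∃_Δ − b∀_Δ entrywise. -/
lemma sign_mul_self_eq_abs (r : ℝ) : Real.sign r * r = |r| := by
  rcases lt_trichotomy r 0 with h | h | h
  · rw [Real.sign_of_neg h, abs_of_neg h]; ring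
  · simp [h]
  · rw [Real.sign_of_pos h, abs_of_pos h]; ring

lemma abs_sign_le_one (r : ℝ) : |Real.sign r| ≤ 1 := by
  rcases lt_trichotomy r 0 with h | h | h
  · rw [Real.sign_of_neg h]; norm_num
  · simp [h]
  · rw [Real.sign_of_pos h]; norm_num

/-- AE solutions to interval inequalities `𝐀x ≤ 𝐛`:
`x` is an AE solution iff `A_c x − b_c ≤ (A∃_Δ − A∀_Δ)|x| + b∃_Δ − b∀_Δ`. -/
theorem ae_solution_inequalities_iff
    {m n : ℕ}
    (Afc Aec AfΔ AeΔ : Matrix (Fin m) (Fin n) ℝ)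
    (bfc bec bfΔ beΔ : Fin m → ℝ)
    (hAfΔ : ∀ i j, 0 ≤ AfΔ i j) (hAeΔ : ∀ i j, 0 ≤ AeΔ i j)
    (hbfΔ : ∀ i, 0 ≤ bfΔ i) (hbeΔ : ∀ i, 0 ≤ beΔ i)
    (x : Fin n → ℝ) :
    (∀ Af : Matrix (Fin m) (Fin n) ℝ, (∀ i j, |Af i j - Afc i j| ≤ AfΔ i j) →
      ∀ bf : Fin m → ℝ, (∀ i, |bf i - bfc i| ≤ bfΔ i) →
        ∃ Ae : Matrix (Fin m) (Fin n) ℝ, (∀ i j, |Ae i j - Aec i j| ≤ AeΔ i j) ∧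
          ∃ be : Fin m → ℝ, (∀ i, |be i - bec i| ≤ beΔ i) ∧
            ∀ i, ((Af + Ae).mulVec x) i ≤ bf i + be i)
    ↔
    (∀ i, ((Afc + Aec).mulVec x) i - (bfc i + bec i) ≤
      ((AeΔ - AfΔ).mulVec (fun j => |x j|)) i + (beΔ i - bfΔ i)) := by
  constructor
  · intro H i
    set Af : Matrix (Fin m) (Fin n) ℝ :=
      fun i j => Afc i j + AfΔ i j * Real.sign (x j) with hAfdef
    have hAf : ∀ i j, |Af i j - Afc i j| ≤ AfΔ i j := by
      intro i j
      have : |AfΔ i j * Real.sign (x j)| ≤ AfΔ i j * 1 := by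
        rw [abs_mul, abs_of_nonneg (hAfΔ i j)]
        exact mul_le_mul_of_nonneg_left (abs_sign_le_one _) (hAfΔ i j)
      simpa [hAfdef] using this.trans (le_of_eq (mul_one _))
    set bf : Fin m → ℝ := fun i => bfc i - bfΔ i with hbfdef
    have hbf : ∀ i, |bf i - bfc i| ≤ bfΔ i := by
      intro i; simp [hbfdef, abs_of_nonneg (hbfΔ i)]
    obtain ⟨Ae, hAe, be, hbe, hle⟩ := H Af hAf bf hbf
    have h1 : Af.mulVec x i = Afc.mulVec x i + AfΔ.mulVec (fun j => |x j|) i := by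
      simp only [Matrix.mulVec, dotProduct, hAfdef, ← Finset.sum_add_distrib]
      apply Finset.sum_congr rfl
      intro j _
      rw [add_mul, mul_assoc, sign_mul_self_eq_abs]
    have h2 : Aec.mulVec x i - AeΔ.mulVec (fun j => |x j|) i ≤ Ae.mulVec x i := by
      simp only [Matrix.mulVec, dotProduct, ← Finset.sum_sub_distrib]
      apply Finset.sum_le_sum
      intro j _
      have h := hAe i j
      have h3 : (Aec i j - Ae i j) * x j ≤ AeΔ i j * |x j| := by
        calc (Aec i j - Ae i j) * x j ≤ |(Aec i j - Ae i j) * x j| := le_abs_self _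
          _ = |Aec i j - Ae i j| * |x j| := abs_mul _ _
          _ ≤ AeΔ i j * |x j| := by
              apply mul_le_mul_of_nonneg_right _ (abs_nonneg _)
              rwa [abs_sub_comm]
        
      nlinarith
    have h3 : be i ≤ bec i + beΔ i := by
      have := hbe i
      have := abs_le.mp this
      linarith [this.2]
    have h4 := hle i
    rw [Matrix.add_mulVec, Pi.add_apply] at h4 ⊢
    rw [Matrix.sub_mulVec, Pi.sub_apply]
    have hbfv : bf i = bfc i - bfΔ i := rfl
    linarith
  · intro H Af hAf bf hbf
    set Ae : Matrix (Fin m) (Fin n) ℝ :=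
      fun i j => Aec i j - AeΔ i j * Real.sign (x j) with hAedef
    refine ⟨Ae, ?_, fun i => bec i + beΔ i, ?_, ?_⟩
    · intro i j
      have : |AeΔ i j * Real.sign (x j)| ≤ AeΔ i j := by
        rw [abs_mul, abs_of_nonneg (hAeΔ i j)]
        calc AeΔ i j * |Real.sign (x j)| ≤ AeΔ i j * 1 :=
              mul_le_mul_of_nonneg_left (abs_sign_le_one _) (hAeΔ i j)
          _ = AeΔ i j := mul_one _
      simpa [hAedef, abs_neg] using this
    · intro i; simp [abs_of_nonneg (hbeΔ i)]
    · intro i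
      have h1 : Ae.mulVec x i = Aec.mulVec x i - AeΔ.mulVec (fun j => |x j|) i := by
        simp only [Matrix.mulVec, dotProduct, hAedef, ← Finset.sum_sub_distrib]
        apply Finset.sum_congr rfl
        intro j _
        rw [sub_mul, mul_assoc, sign_mul_self_eq_abs]
      have h2 : Af.mulVec x i ≤ Afc.mulVec x i + AfΔ.mulVec (fun j => |x j|) i := by
        simp only [Matrix.mulVec, dotProduct, ← Finset.sum_add_distrib]
        apply Finset.sum_le_sum
        intro j _
        have h3 : (Af i j - Afc i j) * x j ≤ AfΔ i j * |x j| := by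
          calc (Af i j - Afc i j) * x j ≤ |(Af i j - Afc i j) * x j| := le_abs_self _
            _ = |Af i j - Afc i j| * |x j| := abs_mul _ _
            _ ≤ AfΔ i j * |x j| :=
                mul_le_mul_of_nonneg_right (hAf i j) (abs_nonneg _)
        nlinarith
      have h3 : bfc i - bfΔ i ≤ bf i := by
        have := abs_le.mp (hbf i)
        linarith [this.1]
      have h4 := H i
      rw [Matrix.add_mulVec, Pi.add_apply] at h4 ⊢
      rw [Matrix.sub_mulVec, Pi.sub_apply] at h4
      rw [h1]
      beta_reduce
      linarith
end

section
/- For an m×n interval matrix 𝐀 with midpoint A_c, radius A_Δ, and an interval vector 𝐛 with midpoint b_c, radius b_Δ: a vector x ∈ ℝⁿ with x ≥ 0 is a weak solution of 𝐀x = 𝐛 (i.e., Ax = b for some A ∈ 𝐀, b ∈ 𝐛) if and only if (A_c − A_Δ)x ≤ b_c + b_Δ and (A_c + A_Δ)x ≥ b_c − b_Δ. -/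
/-! For `x ≥ 0` the map `A ↦ (A x)ᵢ` is monotone in the entries of row `i`, so over the interval
matrix it takes values in `[((A_c − A_Δ)x)ᵢ, ((A_c + A_Δ)x)ᵢ]`, and by the intermediate value
theorem along `A_c + θ A_Δ`, `θ ∈ [-1, 1]`, it takes all of them. Rows can be chosen
independently, so `x` is a weak solution iff each of these intervals meets `[b_c − b_Δ, b_c + b_Δ]ᵢ`,
which is the pair of inequalities. -/

open Matrix Set

section IntervalDotProduct

variable {ι : Type*} [Fintype ι]

theorem dotProduct_mem_Icc_of_abs_sub_le {a c d x : ι → ℝ} (ha : ∀ j, |a j - c j| ≤ d j)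
    (hx : 0 ≤ x) : a ⬝ᵥ x ∈ Icc ((c - d) ⬝ᵥ x) ((c + d) ⬝ᵥ x) := by
  have hlo : c - d ≤ a := fun j => by
    have := (abs_le.1 (ha j)).1
    simp only [Pi.sub_apply]; linarith
  have hhi : a ≤ c + d := fun j => by
    have := (abs_le.1 (ha j)).2
    simp only [Pi.add_apply]; linarith
  exact ⟨dotProduct_le_dotProduct_of_nonneg_right hlo hx,
    dotProduct_le_dotProduct_of_nonneg_right hhi hx⟩

theorem exists_abs_sub_le_dotProduct_eq {c d x : ι → ℝ} (hd : 0 ≤ d) {t : ℝ}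
    (ht : t ∈ Icc ((c - d) ⬝ᵥ x) ((c + d) ⬝ᵥ x)) :
    ∃ a : ι → ℝ, (∀ j, |a j - c j| ≤ d j) ∧ a ⬝ᵥ x = t := by
  have hseg : ∀ θ : ℝ, (c + θ • d) ⬝ᵥ x = c ⬝ᵥ x + θ * (d ⬝ᵥ x) := fun θ => by
    rw [add_dotProduct, smul_dotProduct, smul_eq_mul]
  have hcont : ContinuousOn (fun θ : ℝ => c ⬝ᵥ x + θ * (d ⬝ᵥ x)) (Icc (-1) 1) := by
    fun_prop
  have hends : Icc ((c - d) ⬝ᵥ x) ((c + d) ⬝ᵥ x)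
      = Icc (c ⬝ᵥ x + -1 * (d ⬝ᵥ x)) (c ⬝ᵥ x + 1 * (d ⬝ᵥ x)) := by
    rw [sub_dotProduct, add_dotProduct]; ring_nf
  obtain ⟨θ, hθ, hθt⟩ := intermediate_value_Icc (by norm_num) hcont (hends ▸ ht)
  refine ⟨c + θ • d, fun j => ?_, (hseg θ).trans hθt⟩
  rw [Pi.add_apply, add_sub_cancel_left, Pi.smul_apply, smul_eq_mul, abs_mul,
    abs_of_nonneg (hd j)]
  exact mul_le_of_le_one_left (hd j) (abs_le.2 hθ)

end IntervalDotProduct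

/-- Weak solutions of `𝐀x = 𝐛` with `x ≥ 0`:
`x ≥ 0` is a weak solution iff `(A_c − A_Δ)x ≤ b_c + b_Δ` and `(A_c + A_Δ)x ≥ b_c − b_Δ`. -/
theorem weak_solution_equations_nonneg_iff
    {m n : ℕ}
    (Ac AΔ : Matrix (Fin m) (Fin n) ℝ)
    (bc bΔ : Fin m → ℝ)
    (hAΔ : ∀ i j, 0 ≤ AΔ i j) (hbΔ : ∀ i, 0 ≤ bΔ i)
    (x : Fin n → ℝ) (hx : ∀ j, 0 ≤ x j) :
    (∃ A : Matrix (Fin m) (Fin n) ℝ, (∀ i j, |A i j - Ac i j| ≤ AΔ i j) ∧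
      ∃ b : Fin m → ℝ, (∀ i, |b i - bc i| ≤ bΔ i) ∧ A.mulVec x = b)
    ↔
    ((∀ i, ((Ac - AΔ).mulVec x) i ≤ bc i + bΔ i) ∧
     (∀ i, ((Ac + AΔ).mulVec x) i ≥ bc i - bΔ i)) := by
  constructor
  · rintro ⟨A, hA, b, hb, rfl⟩
    have hrow i : ((Ac - AΔ) *ᵥ x) i ≤ (A *ᵥ x) i ∧ (A *ᵥ x) i ≤ ((Ac + AΔ) *ᵥ x) i :=
      dotProduct_mem_Icc_of_abs_sub_le (hA i) hx
    exact ⟨fun i => by linarith [hrow i, abs_le.1 (hb i)],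
      fun i => by linarith [hrow i, abs_le.1 (hb i)]⟩
  · rintro ⟨hlo, hhi⟩
    set t : Fin m → ℝ := fun i => max (((Ac - AΔ) *ᵥ x) i) (bc i - bΔ i)
    have ht_row i : t i ∈ Icc (((Ac - AΔ) *ᵥ x) i) (((Ac + AΔ) *ᵥ x) i) := by
      have hAx : ((Ac - AΔ) *ᵥ x) i ≤ ((Ac + AΔ) *ᵥ x) i :=
        dotProduct_le_dotProduct_of_nonneg_right
          (fun j => by simp only [Matrix.sub_apply, Matrix.add_apply]; linarith [hAΔ i j]) hx
      exact ⟨le_max_left _ _, max_le hAx (hhi i)⟩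
    have ht_rhs i : |t i - bc i| ≤ bΔ i := by
      have : t i ≤ bc i + bΔ i := max_le (hlo i) (by linarith [hbΔ i])
      exact abs_le.2 ⟨by linarith [le_max_right (((Ac - AΔ) *ᵥ x) i) (bc i - bΔ i)], by linarith⟩
    choose A hA hAx using fun i => exists_abs_sub_le_dotProduct_eq (hAΔ i) (ht_row i)
    exact ⟨Matrix.of A, hA, t, ht_rhs, funext hAx⟩
end

section
/- A vector x ∈ ℝⁿ with x ≥ 0 is a strong solution of the interval system 𝐀x = 𝐛 (i.e., Ax = b for every A ∈ 𝐀 and every b ∈ 𝐛) if and only if (A_c − A_Δ)x ≥ b_c + b_Δ and (A_c + A_Δ)x ≤ b_c − b_Δ; moreover, this holds if and only if A_c x = b_c, A_Δ x = 0 and b_Δ = 0. -/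
/-- Strong solutions of `𝐀x = 𝐛` with `x ≥ 0`: characterization by two inequalities,
and equivalently by `A_c x = b_c`, `A_Δ x = 0`, `b_Δ = 0`. -/
theorem strong_solution_equations_nonneg_iff
    {m n : ℕ}
    (Ac AΔ : Matrix (Fin m) (Fin n) ℝ)
    (bc bΔ : Fin m → ℝ)
    (hAΔ : ∀ i j, 0 ≤ AΔ i j) (hbΔ : ∀ i, 0 ≤ bΔ i)
    (x : Fin n → ℝ) (hx : ∀ j, 0 ≤ x j) :
    ((∀ A : Matrix (Fin m) (Fin n) ℝ, (∀ i j, |A i j - Ac i j| ≤ AΔ i j) →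
        ∀ b : Fin m → ℝ, (∀ i, |b i - bc i| ≤ bΔ i) → A.mulVec x = b)
      ↔
      ((∀ i, ((Ac - AΔ).mulVec x) i ≥ bc i + bΔ i) ∧
       (∀ i, ((Ac + AΔ).mulVec x) i ≤ bc i - bΔ i)))
    ∧
    ((∀ A : Matrix (Fin m) (Fin n) ℝ, (∀ i j, |A i j - Ac i j| ≤ AΔ i j) →
        ∀ b : Fin m → ℝ, (∀ i, |b i - bc i| ≤ bΔ i) → A.mulVec x = b)
      ↔
      (Ac.mulVec x = bc ∧ AΔ.mulVec x = 0 ∧ bΔ = 0)) := by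
  have hAxnn : ∀ i, 0 ≤ (AΔ.mulVec x) i := by
    intro i
    simp only [Matrix.mulVec, dotProduct]
    exact Finset.sum_nonneg fun j _ => mul_nonneg (hAΔ i j) (hx j)
  have key : (∀ A : Matrix (Fin m) (Fin n) ℝ, (∀ i j, |A i j - Ac i j| ≤ AΔ i j) →
        ∀ b : Fin m → ℝ, (∀ i, |b i - bc i| ≤ bΔ i) → A.mulVec x = b)
      ↔ (Ac.mulVec x = bc ∧ AΔ.mulVec x = 0 ∧ bΔ = 0) := by
    constructor
    · intro h
      have hAc : ∀ i j, |Ac i j - Ac i j| ≤ AΔ i j := fun i j => by simpa using hAΔ i j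
      have hbc : ∀ i, |bc i - bc i| ≤ bΔ i := fun i => by simpa using hbΔ i
      have h1 : Ac.mulVec x = bc := h Ac hAc bc hbc
      have h2 : (Ac + AΔ).mulVec x = bc := by
        refine h (Ac + AΔ) (fun i j => ?_) bc hbc
        simp [abs_of_nonneg (hAΔ i j)]
      have h3 : AΔ.mulVec x = 0 := by
        have := h2
        rw [Matrix.add_mulVec, h1] at this
        funext i
        have := congrFun this i
        simp only [Pi.add_apply, Pi.zero_apply] at this ⊢
        linarith
      have h4 : bΔ = 0 := by
        have := h Ac hAc (bc + bΔ) (fun i => by simp [abs_of_nonneg (hbΔ i)])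
        rw [h1] at this
        funext i
        have := congrFun this i
        simp only [Pi.add_apply, Pi.zero_apply] at this ⊢
        linarith
      exact ⟨h1, h3, h4⟩
    · rintro ⟨h1, h2, h3⟩ A hA b hb
      have hb' : b = bc := by
        funext i
        have h5 := hb i
        rw [h3] at h5
        simp only [Pi.zero_apply] at h5
        have h6 := abs_nonneg (b i - bc i)
        have := abs_eq_zero.mp (le_antisymm h5 h6)
        linarith
      have hAx : A.mulVec x = Ac.mulVec x := by
        funext i
        have hle : |(A.mulVec x) i - (Ac.mulVec x) i| ≤ (AΔ.mulVec x) i := by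
          simp only [Matrix.mulVec, dotProduct]
          rw [← Finset.sum_sub_distrib]
          refine (Finset.abs_sum_le_sum_abs _ _).trans (Finset.sum_le_sum fun j _ => ?_)
          rw [← sub_mul, abs_mul, abs_of_nonneg (hx j)]
          exact mul_le_mul_of_nonneg_right (hA i j) (hx j)
        rw [h2] at hle
        simp only [Pi.zero_apply] at hle
        have := abs_nonneg ((A.mulVec x) i - (Ac.mulVec x) i)
        have h0 : (A.mulVec x) i - (Ac.mulVec x) i = 0 := abs_eq_zero.mp (le_antisymm hle this)
        linarith
      rw [hAx, h1, hb']
  have ineq : ((∀ i, ((Ac - AΔ).mulVec x) i ≥ bc i + bΔ i) ∧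
       (∀ i, ((Ac + AΔ).mulVec x) i ≤ bc i - bΔ i))
      ↔ (Ac.mulVec x = bc ∧ AΔ.mulVec x = 0 ∧ bΔ = 0) := by
    constructor
    · rintro ⟨hg, hl⟩
      have comp : ∀ i, Ac.mulVec x i = bc i ∧ AΔ.mulVec x i = 0 ∧ bΔ i = 0 := by
        intro i
        have hg' := hg i
        have hl' := hl i
        rw [Matrix.sub_mulVec] at hg'
        rw [Matrix.add_mulVec] at hl'
        simp only [Pi.sub_apply, Pi.add_apply] at hg' hl'
        have := hAxnn i
        have := hbΔ i
        refine ⟨by linarith, by linarith, by linarith⟩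
      exact ⟨funext fun i => (comp i).1, funext fun i => (comp i).2.1,
        funext fun i => (comp i).2.2⟩
    · rintro ⟨h1, h2, h3⟩
      constructor <;> intro i <;>
        [rw [Matrix.sub_mulVec]; rw [Matrix.add_mulVec]] <;>
        simp [h1, h2, h3]
  exact ⟨key.trans ineq.symm, key⟩
end

section
/- A vector x ∈ ℝⁿ is a tolerable solution of interval inequalities 𝐀x ≤ 𝐛 (i.e., for every A ∈ 𝐀 there exists b ∈ 𝐛 with Ax ≤ b) if and only if A_c x + A_Δ|x| ≤ b_c + b_Δ entrywise. -/
/-- Tolerable solutions of `𝐀x ≤ 𝐛`: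
`x` is tolerable iff `A_c x + A_Δ|x| ≤ b_c + b_Δ`. -/
theorem tolerable_solution_inequalities_iff
    {m n : ℕ}
    (Ac AΔ : Matrix (Fin m) (Fin n) ℝ)
    (bc bΔ : Fin m → ℝ)
    (hAΔ : ∀ i j, 0 ≤ AΔ i j) (hbΔ : ∀ i, 0 ≤ bΔ i)
    (x : Fin n → ℝ) :
    (∀ A : Matrix (Fin m) (Fin n) ℝ, (∀ i j, |A i j - Ac i j| ≤ AΔ i j) →
      ∃ b : Fin m → ℝ, (∀ i, |b i - bc i| ≤ bΔ i) ∧ ∀ i, (A.mulVec x) i ≤ b i)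
    ↔
    (∀ i, (Ac.mulVec x) i + (AΔ.mulVec (fun j => |x j|)) i ≤ bc i + bΔ i) := by
  constructor
  · intro h i
    set A : Matrix (Fin m) (Fin n) ℝ :=
      fun i j => Ac i j + (if 0 ≤ x j then AΔ i j else -AΔ i j) with hA
    obtain ⟨b, hb, hle⟩ := h A (by
      intro i j
      simp only [hA, add_sub_cancel_left]
      split <;> simp [abs_of_nonneg (hAΔ i j), hAΔ i j])
    have hAx : (A.mulVec x) i = (Ac.mulVec x) i + (AΔ.mulVec (fun j => |x j|)) i := by
      simp only [Matrix.mulVec, dotProduct, hA, ← Finset.sum_add_distrib]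
      refine Finset.sum_congr rfl fun j _ => ?_
      by_cases hx : 0 ≤ x j
      · simp [hx, abs_of_nonneg hx]; ring
      · simp only [hx, if_false]
        rw [abs_of_neg (lt_of_not_ge hx)]; ring
    have hbi : b i ≤ bc i + bΔ i := by
      have := abs_le.mp (hb i)
      linarith [this.2]
    calc (Ac.mulVec x) i + (AΔ.mulVec (fun j => |x j|)) i = (A.mulVec x) i := hAx.symm
      _ ≤ b i := hle i
      _ ≤ bc i + bΔ i := hbi
  · intro h A hA
    refine ⟨fun i => bc i + bΔ i, fun i => by simp [abs_of_nonneg (hbΔ i)], fun i => ?_⟩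
    have key : (A.mulVec x) i ≤ (Ac.mulVec x) i + (AΔ.mulVec (fun j => |x j|)) i := by
      simp only [Matrix.mulVec, dotProduct, ← Finset.sum_add_distrib]
      refine Finset.sum_le_sum fun j _ => ?_
      have h1 : (A i j - Ac i j) * x j ≤ AΔ i j * |x j| := by
        calc (A i j - Ac i j) * x j ≤ |(A i j - Ac i j) * x j| := le_abs_self _
          _ = |A i j - Ac i j| * |x j| := abs_mul _ _
          _ ≤ AΔ i j * |x j| := by
              exact mul_le_mul_of_nonneg_right (hA i j) (abs_nonneg _)
      nlinarith [h1]
    exact le_trans key (h i)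
end

section
/- A vector x ∈ ℝⁿ is a controllable solution of interval inequalities 𝐀x ≤ 𝐛 (i.e., for every b ∈ 𝐛 there exists A ∈ 𝐀 with Ax ≤ b) if and only if A_c x − A_Δ|x| ≤ b_c − b_Δ entrywise. -/
/-- Controllable solutions of `𝐀x ≤ 𝐛`:
`x` is controllable iff `A_c x − A_Δ|x| ≤ b_c − b_Δ`. -/
theorem controllable_solution_inequalities_iff
    {m n : ℕ}
    (Ac AΔ : Matrix (Fin m) (Fin n) ℝ)
    (bc bΔ : Fin m → ℝ)
    (hAΔ : ∀ i j, 0 ≤ AΔ i j) (hbΔ : ∀ i, 0 ≤ bΔ i)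
    (x : Fin n → ℝ) :
    (∀ b : Fin m → ℝ, (∀ i, |b i - bc i| ≤ bΔ i) →
      ∃ A : Matrix (Fin m) (Fin n) ℝ, (∀ i j, |A i j - Ac i j| ≤ AΔ i j) ∧
        ∀ i, (A.mulVec x) i ≤ b i)
    ↔
    (∀ i, (Ac.mulVec x) i - (AΔ.mulVec (fun j => |x j|)) i ≤ bc i - bΔ i) := by
  constructor
  · intro h i
    obtain ⟨A, hA, hAx⟩ := h (fun i => bc i - bΔ i) (by
      intro i
      simpa using (abs_of_nonpos (by linarith [hbΔ i] : bc i - bΔ i - bc i ≤ 0)).le.trans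
        (by linarith [hbΔ i]))
    have key : (Ac.mulVec x) i - (AΔ.mulVec (fun j => |x j|)) i ≤ (A.mulVec x) i := by
      simp only [Matrix.mulVec, dotProduct, ← Finset.sum_sub_distrib]
      apply Finset.sum_le_sum
      intro j _
      have h1 : (Ac i j - A i j) * x j ≤ AΔ i j * |x j| := by
        calc (Ac i j - A i j) * x j ≤ |(Ac i j - A i j) * x j| := le_abs_self _
          _ = |A i j - Ac i j| * |x j| := by rw [abs_mul, abs_sub_comm]
          _ ≤ AΔ i j * |x j| := by
              exact mul_le_mul_of_nonneg_right (hA i j) (abs_nonneg _)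
      linarith
    linarith [hAx i]
  · intro h b hb
    set s : Fin n → ℝ := fun j => if x j < 0 then -1 else 1 with hs
    refine ⟨fun i j => Ac i j - AΔ i j * s j, ?_, ?_⟩
    · intro i j
      have : |s j| = 1 := by
        by_cases hx : x j < 0 <;> simp [hs, hx]
      calc |Ac i j - AΔ i j * s j - Ac i j| = AΔ i j * |s j| := by
            rw [show Ac i j - AΔ i j * s j - Ac i j = -(AΔ i j * s j) by ring,
              abs_neg, abs_mul, abs_of_nonneg (hAΔ i j)]
        _ ≤ AΔ i j := by rw [this, mul_one]
    · intro i
      have hsx : ∀ j, s j * x j = |x j| := by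
        intro j
        by_cases hx : x j < 0
        · simp [hs, hx, abs_of_neg hx]
        · simp [hs, hx, abs_of_nonneg (not_lt.mp hx)]
      have hbi : bc i - bΔ i ≤ b i := by
        have := neg_abs_le (b i - bc i)
        have := hb i
        linarith [neg_le_neg (hb i), neg_abs_le (b i - bc i)]
      have heq : (Matrix.mulVec (fun i j => Ac i j - AΔ i j * s j) x) i
          = (Ac.mulVec x) i - (AΔ.mulVec (fun j => |x j|)) i := by
        simp only [Matrix.mulVec, dotProduct, ← Finset.sum_sub_distrib]
        apply Finset.sum_congr rfl
        intro j _
        rw [← hsx j]; ring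
      rw [heq]
      linarith [h i]
end

section
/- A vector x ∈ ℝⁿ with x ≥ 0 is a controllable solution of 𝐀x ≤ 𝐛, x ≥ 0 (for every b ∈ 𝐛 there exists A ∈ 𝐀 with Ax ≤ b) if and only if (A_c − A_Δ)x ≤ b_c − b_Δ. -/
/-- Controllable solutions of `𝐀x ≤ 𝐛`, `x ≥ 0`:
nonnegative `x` is controllable iff `(A_c − A_Δ)x ≤ b_c − b_Δ`. -/
theorem controllable_solution_inequalities_nonneg_iff
    {m n : ℕ}
    (Ac AΔ : Matrix (Fin m) (Fin n) ℝ)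
    (bc bΔ : Fin m → ℝ)
    (hAΔ : ∀ i j, 0 ≤ AΔ i j) (hbΔ : ∀ i, 0 ≤ bΔ i)
    (x : Fin n → ℝ) (hx : ∀ j, 0 ≤ x j) :
    (∀ b : Fin m → ℝ, (∀ i, |b i - bc i| ≤ bΔ i) →
      ∃ A : Matrix (Fin m) (Fin n) ℝ, (∀ i j, |A i j - Ac i j| ≤ AΔ i j) ∧
        ∀ i, (A.mulVec x) i ≤ b i)
    ↔
    (∀ i, ((Ac - AΔ).mulVec x) i ≤ bc i - bΔ i) := by
  constructor
  · intro h i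
    obtain ⟨A, hA, hAx⟩ := h (fun i => bc i - bΔ i) (fun i => by
      simpa [abs_of_nonpos, hbΔ i] using (hbΔ i))
    refine le_trans ?_ (hAx i)
    simp only [Matrix.mulVec, dotProduct, Matrix.sub_apply]
    apply Finset.sum_le_sum
    intro j _
    have h1 : Ac i j - AΔ i j ≤ A i j := by
      have := (abs_le.mp (hA i j)).1; linarith
    exact mul_le_mul_of_nonneg_right h1 (hx j)
  · intro h b hb
    refine ⟨Ac - AΔ, fun i j => by
      simp only [Matrix.sub_apply]
      rw [show Ac i j - AΔ i j - Ac i j = -(AΔ i j) by ring, abs_neg,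
        abs_of_nonneg (hAΔ i j)], fun i => ?_⟩
    have := (abs_le.mp (hb i)).1
    have := h i
    linarith
end

section
/- Restricted to an orthant {y : diag(s)y ≥ 0} for a fixed sign vector s ∈ {±1}^{n'}, the set of AE solutions (x, y) of the general interval system 𝐀x + 𝐁y = 𝐚, 𝐂x + 𝐃y ≤ 𝐛, x ≥ 0 is a convex polyhedral set, described by finitely many linear inequalities; hence the full AE solution set is a union of at most 2^{n'} convex polyhedral sets. -/
noncomputable def sgn (x : ℝ) : ℝ := if 0 ≤ x then 1 else -1

lemma sgn_mul_self (x : ℝ) : sgn x * x = |x| := by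
  unfold sgn; split
  · rw [one_mul, abs_of_nonneg ‹_›]
  · rw [abs_of_neg (lt_of_not_ge ‹_›)]; ring

lemma abs_sgn (x : ℝ) : |sgn x| = 1 := by
  unfold sgn; split <;> simp

lemma mulVec_sub_abs_le {m n : ℕ} (E C Δ : Matrix (Fin m) (Fin n) ℝ)
    (h : ∀ i j, |E i j - C i j| ≤ Δ i j) (x : Fin n → ℝ) (i : Fin m) :
    |(E.mulVec x) i - (C.mulVec x) i| ≤ (Δ.mulVec (fun j => |x j|)) i := by
  simp only [Matrix.mulVec, dotProduct, ← Finset.sum_sub_distrib]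
  refine (Finset.abs_sum_le_sum_abs _ _).trans (Finset.sum_le_sum fun j _ => ?_)
  rw [← sub_mul, abs_mul]
  exact mul_le_mul_of_nonneg_right (h i j) (abs_nonneg _)

lemma exists_extreme {m n : ℕ} (C Δ : Matrix (Fin m) (Fin n) ℝ) (hΔ : ∀ i j, 0 ≤ Δ i j)
    (x : Fin n → ℝ) (ε : Fin m → ℝ) (hε : ∀ i, |ε i| ≤ 1) :
    ∃ E : Matrix (Fin m) (Fin n) ℝ, (∀ i j, |E i j - C i j| ≤ Δ i j) ∧
      ∀ i, (E.mulVec x) i = (C.mulVec x) i + ε i * (Δ.mulVec (fun j => |x j|)) i := by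
  refine ⟨fun i j => C i j + ε i * Δ i j * sgn (x j), fun i j => ?_, fun i => ?_⟩
  · rw [add_sub_cancel_left, abs_mul, abs_mul, abs_sgn, abs_of_nonneg (hΔ i j), mul_one]
    calc |ε i| * Δ i j ≤ 1 * Δ i j := mul_le_mul_of_nonneg_right (hε i) (hΔ i j)
    _ = Δ i j := one_mul _
  · simp only [Matrix.mulVec, dotProduct]
    rw [Finset.mul_sum, ← Finset.sum_add_distrib]
    refine Finset.sum_congr rfl fun j _ => ?_
    rw [add_mul, ← sgn_mul_self (x j)]; ring

lemma exists_mulVec_eq {m n : ℕ} (C Δ : Matrix (Fin m) (Fin n) ℝ) (hΔ : ∀ i j, 0 ≤ Δ i j)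
    (x : Fin n → ℝ) (t : Fin m → ℝ)
    (ht : ∀ i, |t i| ≤ (Δ.mulVec (fun j => |x j|)) i) :
    ∃ E : Matrix (Fin m) (Fin n) ℝ, (∀ i j, |E i j - C i j| ≤ Δ i j) ∧
      ∀ i, (E.mulVec x) i = (C.mulVec x) i + t i := by
  set d := Δ.mulVec (fun j => |x j|) with hd
  have hε : ∀ i, |if d i = 0 then (0:ℝ) else t i / d i| ≤ 1 := by
    intro i
    by_cases h0 : d i = 0
    · simp [h0]
    · have hdpos : 0 < d i := by
        rcases lt_or_eq_of_le ((abs_nonneg (t i)).trans (ht i)) with h | h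
        · exact h
        · exact absurd h.symm h0
      rw [if_neg h0, abs_div, abs_of_pos hdpos]
      exact div_le_one_of_le₀ (ht i) hdpos.le
  obtain ⟨E, hE, hEx⟩ := exists_extreme C Δ hΔ x (fun i => if d i = 0 then 0 else t i / d i) hε
  refine ⟨E, hE, fun i => ?_⟩
  rw [hEx i]
  by_cases h0 : d i = 0
  · have ht0 : t i = 0 := by have := ht i; rw [h0] at this; exact abs_eq_zero.mp (le_antisymm this (abs_nonneg _))
    simp [h0, ht0]
  · rw [if_neg h0, div_mul_cancel₀ _ h0]

lemma split2 (r c1 c2 : ℝ) (h1 : 0 ≤ c1) (h2 : 0 ≤ c2) (h : |r| ≤ c1 + c2) :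
    ∃ r1 r2, |r1| ≤ c1 ∧ |r2| ≤ c2 ∧ r = r1 + r2 := by
  rw [abs_le] at h
  refine ⟨max (-c1) (min c1 r), r - max (-c1) (min c1 r), ?_, ?_, by ring⟩
  · rw [abs_le]
    constructor
    · exact le_max_left _ _
    · exact max_le (by linarith) (min_le_left _ _)
  · rw [abs_le]
    rcases max_cases (-c1) (min c1 r) with ⟨he, hle⟩ | ⟨he, hle⟩ <;>
      rcases min_cases c1 r with ⟨he2, hle2⟩ | ⟨he2, hle2⟩ <;> rw [he] <;>
      constructor <;> first | linarith [he2 ▸ hle] | (rw [he2] at * ; linarith) | linarith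

lemma split3 (r c1 c2 c3 : ℝ) (h1 : 0 ≤ c1) (h2 : 0 ≤ c2) (h3 : 0 ≤ c3)
    (h : |r| ≤ c1 + c2 + c3) :
    ∃ r1 r2 r3, |r1| ≤ c1 ∧ |r2| ≤ c2 ∧ |r3| ≤ c3 ∧ r = r1 + r2 + r3 := by
  obtain ⟨r1, r23, hr1, hr23, hsum⟩ := split2 r c1 (c2 + c3) h1 (by linarith) (by linarith [h]; )
  obtain ⟨r2, r3, hr2, hr3, hsum2⟩ := split2 r23 c2 c3 h2 h3 hr23
  exact ⟨r1, r2, r3, hr1, hr2, hr3, by rw [hsum, hsum2]; ring⟩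

lemma sgn_sq (t : ℝ) : sgn t * sgn t = 1 := by unfold sgn; split <;> norm_num

lemma mulVec_abs_nonneg {m n : ℕ} (Δ : Matrix (Fin m) (Fin n) ℝ) (hΔ : ∀ i j, 0 ≤ Δ i j)
    (x : Fin n → ℝ) (i : Fin m) : 0 ≤ (Δ.mulVec (fun j => |x j|)) i := by
  simp only [Matrix.mulVec, dotProduct]
  exact Finset.sum_nonneg fun j _ => mul_nonneg (hΔ i j) (abs_nonneg _)

/-- `(x,y)` is an AE solution of the general interval system
`𝐀x + 𝐁y = 𝐚, 𝐂x + 𝐃y ≤ 𝐛, x ≥ 0`. -/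
def IsAESolGen {m n m' n' : ℕ}
    (Afc AfΔ Aec AeΔ : Matrix (Fin m) (Fin n) ℝ)
    (Bfc BfΔ Bec BeΔ : Matrix (Fin m) (Fin n') ℝ)
    (Cfc CfΔ Cec CeΔ : Matrix (Fin m') (Fin n) ℝ)
    (Dfc DfΔ Dec DeΔ : Matrix (Fin m') (Fin n') ℝ)
    (afc afΔ aec aeΔ : Fin m → ℝ)
    (bfc bfΔ bec beΔ : Fin m' → ℝ)
    (x : Fin n → ℝ) (y : Fin n' → ℝ) : Prop :=
  ∀ Af : Matrix (Fin m) (Fin n) ℝ, (∀ i j, |Af i j - Afc i j| ≤ AfΔ i j) →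
  ∀ Bf : Matrix (Fin m) (Fin n') ℝ, (∀ i j, |Bf i j - Bfc i j| ≤ BfΔ i j) →
  ∀ Cf : Matrix (Fin m') (Fin n) ℝ, (∀ i j, |Cf i j - Cfc i j| ≤ CfΔ i j) →
  ∀ Df : Matrix (Fin m') (Fin n') ℝ, (∀ i j, |Df i j - Dfc i j| ≤ DfΔ i j) →
  ∀ af : Fin m → ℝ, (∀ i, |af i - afc i| ≤ afΔ i) →
  ∀ bf : Fin m' → ℝ, (∀ i, |bf i - bfc i| ≤ bfΔ i) →
  ∃ Ae : Matrix (Fin m) (Fin n) ℝ, (∀ i j, |Ae i j - Aec i j| ≤ AeΔ i j) ∧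
  ∃ Be : Matrix (Fin m) (Fin n') ℝ, (∀ i j, |Be i j - Bec i j| ≤ BeΔ i j) ∧
  ∃ Ce : Matrix (Fin m') (Fin n) ℝ, (∀ i j, |Ce i j - Cec i j| ≤ CeΔ i j) ∧
  ∃ De : Matrix (Fin m') (Fin n') ℝ, (∀ i j, |De i j - Dec i j| ≤ DeΔ i j) ∧
  ∃ ae : Fin m → ℝ, (∀ i, |ae i - aec i| ≤ aeΔ i) ∧
  ∃ be : Fin m' → ℝ, (∀ i, |be i - bec i| ≤ beΔ i) ∧
    ((Af + Ae).mulVec x + (Bf + Be).mulVec y = af + ae) ∧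
    (∀ i, ((Cf + Ce).mulVec x) i + ((Df + De).mulVec y) i ≤ bf i + be i) ∧
    (∀ j, 0 ≤ x j)

lemma char_abs {m n m' n' : ℕ}
    (Afc AfΔ Aec AeΔ : Matrix (Fin m) (Fin n) ℝ)
    (Bfc BfΔ Bec BeΔ : Matrix (Fin m) (Fin n') ℝ)
    (Cfc CfΔ Cec CeΔ : Matrix (Fin m') (Fin n) ℝ)
    (Dfc DfΔ Dec DeΔ : Matrix (Fin m') (Fin n') ℝ)
    (afc afΔ aec aeΔ : Fin m → ℝ)
    (bfc bfΔ bec beΔ : Fin m' → ℝ)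
    (hAfΔ : ∀ i j, 0 ≤ AfΔ i j) (hAeΔ : ∀ i j, 0 ≤ AeΔ i j)
    (hBfΔ : ∀ i j, 0 ≤ BfΔ i j) (hBeΔ : ∀ i j, 0 ≤ BeΔ i j)
    (hCfΔ : ∀ i j, 0 ≤ CfΔ i j) (hCeΔ : ∀ i j, 0 ≤ CeΔ i j)
    (hDfΔ : ∀ i j, 0 ≤ DfΔ i j) (hDeΔ : ∀ i j, 0 ≤ DeΔ i j)
    (hafΔ : ∀ i, 0 ≤ afΔ i) (haeΔ : ∀ i, 0 ≤ aeΔ i)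
    (hbfΔ : ∀ i, 0 ≤ bfΔ i) (hbeΔ : ∀ i, 0 ≤ beΔ i)
    (x : Fin n → ℝ) (y : Fin n' → ℝ) :
    IsAESolGen Afc AfΔ Aec AeΔ Bfc BfΔ Bec BeΔ Cfc CfΔ Cec CeΔ Dfc DfΔ Dec DeΔ
      afc afΔ aec aeΔ bfc bfΔ bec beΔ x y ↔
    ((∀ i, |(Afc.mulVec x) i + (Aec.mulVec x) i + (Bfc.mulVec y) i + (Bec.mulVec y) i
          - afc i - aec i|
        + ((AfΔ.mulVec (fun j => |x j|)) i + (BfΔ.mulVec (fun j => |y j|)) i + afΔ i)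
        ≤ (AeΔ.mulVec (fun j => |x j|)) i + (BeΔ.mulVec (fun j => |y j|)) i + aeΔ i)
     ∧ (∀ i, (Cfc.mulVec x) i + (Cec.mulVec x) i + (Dfc.mulVec y) i + (Dec.mulVec y) i
        + (CfΔ.mulVec (fun j => |x j|)) i - (CeΔ.mulVec (fun j => |x j|)) i
        + (DfΔ.mulVec (fun j => |y j|)) i - (DeΔ.mulVec (fun j => |y j|)) i
        ≤ bfc i - bfΔ i + bec i + beΔ i)
     ∧ (∀ j, 0 ≤ x j)) := by
  constructor
  · intro h
    have R0 : Fin m → ℝ := fun i => (Afc.mulVec x) i + (Aec.mulVec x) i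
      + (Bfc.mulVec y) i + (Bec.mulVec y) i - afc i - aec i
    obtain ⟨Af, hAf, hAfx⟩ := exists_extreme Afc AfΔ hAfΔ x
      (fun i => sgn ((Afc.mulVec x) i + (Aec.mulVec x) i + (Bfc.mulVec y) i
        + (Bec.mulVec y) i - afc i - aec i)) (fun i => (abs_sgn _).le)
    obtain ⟨Bf, hBf, hBfy⟩ := exists_extreme Bfc BfΔ hBfΔ y
      (fun i => sgn ((Afc.mulVec x) i + (Aec.mulVec x) i + (Bfc.mulVec y) i
        + (Bec.mulVec y) i - afc i - aec i)) (fun i => (abs_sgn _).le)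
    obtain ⟨Cf, hCf, hCfx⟩ := exists_extreme Cfc CfΔ hCfΔ x (fun _ => 1) (fun i => by norm_num)
    obtain ⟨Df, hDf, hDfy⟩ := exists_extreme Dfc DfΔ hDfΔ y (fun _ => 1) (fun i => by norm_num)
    obtain ⟨Ae, hAe, Be, hBe, Ce, hCe, De, hDe, ae, hae, be, hbe, heq, hineq, hx⟩ :=
      h Af hAf Bf hBf Cf hCf Df hDf
        (fun i => afc i - sgn ((Afc.mulVec x) i + (Aec.mulVec x) i + (Bfc.mulVec y) i
          + (Bec.mulVec y) i - afc i - aec i) * afΔ i)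
        (fun i => by
          have h1 : afc i - sgn ((Afc.mulVec x) i + (Aec.mulVec x) i + (Bfc.mulVec y) i
              + (Bec.mulVec y) i - afc i - aec i) * afΔ i - afc i
              = -(sgn ((Afc.mulVec x) i + (Aec.mulVec x) i + (Bfc.mulVec y) i
                + (Bec.mulVec y) i - afc i - aec i) * afΔ i) := by ring
          rw [h1, abs_neg, abs_mul, abs_sgn, one_mul, abs_of_nonneg (hafΔ i)])
        (fun i => bfc i - bfΔ i)
        (fun i => by
          have h1 : bfc i - bfΔ i - bfc i = -(bfΔ i) := by ring
          rw [h1, abs_neg, abs_of_nonneg (hbfΔ i)])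
    refine ⟨fun i => ?_, fun i => ?_, hx⟩
    · have heqi := congrFun heq i
      simp only [Matrix.add_mulVec, Pi.add_apply] at heqi
      rw [hAfx i, hBfy i] at heqi
      set σ := sgn ((Afc.mulVec x) i + (Aec.mulVec x) i + (Bfc.mulVec y) i
        + (Bec.mulVec y) i - afc i - aec i) with hσ
      have hsq : σ * σ = 1 := sgn_sq _
      set u : ℝ := (Ae.mulVec x) i - (Aec.mulVec x) i + ((Be.mulVec y) i - (Bec.mulVec y) i)
        - (ae i - aec i) with hu
      have hueq : |(Afc.mulVec x) i + (Aec.mulVec x) i + (Bfc.mulVec y) i + (Bec.mulVec y) i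
          - afc i - aec i|
          + ((AfΔ.mulVec (fun j => |x j|)) i + (BfΔ.mulVec (fun j => |y j|)) i + afΔ i)
          = -(σ * u) := by
        rw [← sgn_mul_self ((Afc.mulVec x) i + (Aec.mulVec x) i + (Bfc.mulVec y) i
          + (Bec.mulVec y) i - afc i - aec i), ← hσ]
        rw [hu]
        linear_combination σ * heqi - ((AfΔ.mulVec (fun j => |x j|)) i
          + (BfΔ.mulVec (fun j => |y j|)) i + afΔ i) * hsq
      rw [hueq]
      have h2 : -(σ * u) ≤ |u| := by
        calc -(σ * u) ≤ |σ * u| := neg_le_abs _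
        _ = |u| := by rw [abs_mul, hσ, abs_sgn, one_mul]
      refine h2.trans ?_
      calc |u| ≤ |(Ae.mulVec x) i - (Aec.mulVec x) i| + |(Be.mulVec y) i - (Bec.mulVec y) i|
          + |ae i - aec i| := by
            rw [hu]
            calc |(Ae.mulVec x) i - (Aec.mulVec x) i + ((Be.mulVec y) i - (Bec.mulVec y) i)
                - (ae i - aec i)| ≤ |(Ae.mulVec x) i - (Aec.mulVec x) i
                  + ((Be.mulVec y) i - (Bec.mulVec y) i)| + |ae i - aec i| := abs_sub _ _
            _ ≤ _ := by
              have := abs_add_le ((Ae.mulVec x) i - (Aec.mulVec x) i)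
                ((Be.mulVec y) i - (Bec.mulVec y) i)
              linarith
      _ ≤ _ := by
        have h3 := mulVec_sub_abs_le Ae Aec AeΔ hAe x i
        have h4 := mulVec_sub_abs_le Be Bec BeΔ hBe y i
        have h5 := hae i
        linarith
    · have hineqi := hineq i
      simp only [Matrix.add_mulVec, Pi.add_apply] at hineqi
      rw [hCfx i, hDfy i] at hineqi
      have h3 := mulVec_sub_abs_le Ce Cec CeΔ hCe x i
      have h4 := mulVec_sub_abs_le De Dec DeΔ hDe y i
      have h5 := hbe i
      rw [abs_le] at h3 h4 h5
      obtain ⟨h3l, -⟩ := h3; obtain ⟨h4l, -⟩ := h4; obtain ⟨-, h5r⟩ := h5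
      linarith
  · rintro ⟨hE, hI, hX⟩
    intro Af hAf Bf hBf Cf hCf Df hDf af haf bf hbf
    obtain ⟨Ce, hCe, hCex⟩ := exists_extreme Cec CeΔ hCeΔ x (fun _ => -1) (fun i => by norm_num)
    obtain ⟨De, hDe, hDey⟩ := exists_extreme Dec DeΔ hDeΔ y (fun _ => -1) (fun i => by norm_num)
    have ht : ∀ i, |-(((Afc.mulVec x) i + (Aec.mulVec x) i + (Bfc.mulVec y) i + (Bec.mulVec y) i
        - afc i - aec i) + ((Af.mulVec x) i - (Afc.mulVec x) i
        + ((Bf.mulVec y) i - (Bfc.mulVec y) i) - (af i - afc i)))|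
        ≤ (AeΔ.mulVec (fun j => |x j|)) i + (BeΔ.mulVec (fun j => |y j|)) i + aeΔ i := by
      intro i
      rw [abs_neg]
      have hR : |(Af.mulVec x) i - (Afc.mulVec x) i + ((Bf.mulVec y) i - (Bfc.mulVec y) i)
          - (af i - afc i)| ≤ (AfΔ.mulVec (fun j => |x j|)) i
          + (BfΔ.mulVec (fun j => |y j|)) i + afΔ i := by
        calc _ ≤ |(Af.mulVec x) i - (Afc.mulVec x) i + ((Bf.mulVec y) i - (Bfc.mulVec y) i)|
            + |af i - afc i| := abs_sub _ _
        _ ≤ _ := by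
          have h1 := abs_add_le ((Af.mulVec x) i - (Afc.mulVec x) i)
            ((Bf.mulVec y) i - (Bfc.mulVec y) i)
          have h2 := mulVec_sub_abs_le Af Afc AfΔ hAf x i
          have h3 := mulVec_sub_abs_le Bf Bfc BfΔ hBf y i
          have h4 := haf i
          linarith
      have h0 := abs_add_le ((Afc.mulVec x) i + (Aec.mulVec x) i + (Bfc.mulVec y) i
        + (Bec.mulVec y) i - afc i - aec i) ((Af.mulVec x) i - (Afc.mulVec x) i
        + ((Bf.mulVec y) i - (Bfc.mulVec y) i) - (af i - afc i))
      have h5 := hE i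
      linarith
    choose t1 t2 t3 h1 h2 h3 hsum using fun i => split3 _ _ _ _
      (mulVec_abs_nonneg AeΔ hAeΔ x i) (mulVec_abs_nonneg BeΔ hBeΔ y i) (haeΔ i) (ht i)
    obtain ⟨Ae, hAe, hAex⟩ := exists_mulVec_eq Aec AeΔ hAeΔ x t1 h1
    obtain ⟨Be, hBe, hBey⟩ := exists_mulVec_eq Bec BeΔ hBeΔ y t2 h2
    refine ⟨Ae, hAe, Be, hBe, Ce, hCe, De, hDe, fun i => aec i - t3 i,
      (fun i => by
        have hh : aec i - t3 i - aec i = -(t3 i) := by ring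
        rw [hh, abs_neg]; exact h3 i), fun i => bec i + beΔ i,
      (fun i => by rw [add_sub_cancel_left, abs_of_nonneg (hbeΔ i)]), ?_, ?_, hX⟩
    · funext i
      simp only [Matrix.add_mulVec, Pi.add_apply]
      rw [hAex i, hBey i]
      have := hsum i
      linarith
    · intro i
      simp only [Matrix.add_mulVec, Pi.add_apply]
      rw [hCex i, hDey i]
      have h3' := mulVec_sub_abs_le Cf Cfc CfΔ hCf x i
      have h4' := mulVec_sub_abs_le Df Dfc DfΔ hDf y i
      have h5' := hbf i
      rw [abs_le] at h3' h4' h5'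
      obtain ⟨-, h3r⟩ := h3'; obtain ⟨-, h4r⟩ := h4'; obtain ⟨h5l, -⟩ := h5'
      have h6 := hI i
      linarith

lemma abs_add_le_iff (r f e : ℝ) : |r| + f ≤ e ↔ r + f ≤ e ∧ -r + f ≤ e := by
  constructor
  · intro h
    exact ⟨by linarith [le_abs_self r], by linarith [neg_abs_le r]⟩
  · rintro ⟨h1, h2⟩
    rcases abs_cases r with ⟨h, _⟩ | ⟨h, _⟩ <;> linarith

/-- Index type for the rows of the polyhedral description. -/
abbrev RIdx (m m' n n' : ℕ) : Type := (Fin m ⊕ Fin m) ⊕ (Fin m' ⊕ (Fin n ⊕ Fin n'))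

noncomputable def rowM {m n m' n' : ℕ}
    (Afc AfΔ Aec AeΔ : Matrix (Fin m) (Fin n) ℝ)
    (Cfc CfΔ Cec CeΔ : Matrix (Fin m') (Fin n) ℝ) :
    RIdx m m' n n' → Fin n → ℝ
  | .inl (.inl i0) => fun j => Afc i0 j + Aec i0 j + AfΔ i0 j - AeΔ i0 j
  | .inl (.inr i0) => fun j => -(Afc i0 j) - Aec i0 j + AfΔ i0 j - AeΔ i0 j
  | .inr (.inl i1) => fun j => Cfc i1 j + Cec i1 j + CfΔ i1 j - CeΔ i1 j
  | .inr (.inr (.inl j0)) => fun j => if j = j0 then -1 else 0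
  | .inr (.inr (.inr _)) => fun _ => 0

noncomputable def rowN {m n m' n' : ℕ}
    (Bfc BfΔ Bec BeΔ : Matrix (Fin m) (Fin n') ℝ)
    (Dfc DfΔ Dec DeΔ : Matrix (Fin m') (Fin n') ℝ)
    (s : Fin n' → ℝ) :
    RIdx m m' n n' → Fin n' → ℝ
  | .inl (.inl i0) => fun j => Bfc i0 j + Bec i0 j + (BfΔ i0 j - BeΔ i0 j) * s j
  | .inl (.inr i0) => fun j => -(Bfc i0 j) - Bec i0 j + (BfΔ i0 j - BeΔ i0 j) * s j
  | .inr (.inl i1) => fun j => Dfc i1 j + Dec i1 j + (DfΔ i1 j - DeΔ i1 j) * s j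
  | .inr (.inr (.inl _)) => fun _ => 0
  | .inr (.inr (.inr j0)) => fun j => if j = j0 then -(s j0) else 0

noncomputable def rowc {m m' n n' : ℕ}
    (afc afΔ aec aeΔ : Fin m → ℝ) (bfc bfΔ bec beΔ : Fin m' → ℝ) :
    RIdx m m' n n' → ℝ
  | .inl (.inl i0) => afc i0 + aec i0 - afΔ i0 + aeΔ i0
  | .inl (.inr i0) => -(afc i0) - aec i0 - afΔ i0 + aeΔ i0
  | .inr (.inl i1) => bfc i1 - bfΔ i1 + bec i1 + beΔ i1
  | .inr (.inr _) => 0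

lemma char_lin {m n m' n' : ℕ}
    (Afc AfΔ Aec AeΔ : Matrix (Fin m) (Fin n) ℝ)
    (Bfc BfΔ Bec BeΔ : Matrix (Fin m) (Fin n') ℝ)
    (Cfc CfΔ Cec CeΔ : Matrix (Fin m') (Fin n) ℝ)
    (Dfc DfΔ Dec DeΔ : Matrix (Fin m') (Fin n') ℝ)
    (afc afΔ aec aeΔ : Fin m → ℝ)
    (bfc bfΔ bec beΔ : Fin m' → ℝ)
    (hAfΔ : ∀ i j, 0 ≤ AfΔ i j) (hAeΔ : ∀ i j, 0 ≤ AeΔ i j)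
    (hBfΔ : ∀ i j, 0 ≤ BfΔ i j) (hBeΔ : ∀ i j, 0 ≤ BeΔ i j)
    (hCfΔ : ∀ i j, 0 ≤ CfΔ i j) (hCeΔ : ∀ i j, 0 ≤ CeΔ i j)
    (hDfΔ : ∀ i j, 0 ≤ DfΔ i j) (hDeΔ : ∀ i j, 0 ≤ DeΔ i j)
    (hafΔ : ∀ i, 0 ≤ afΔ i) (haeΔ : ∀ i, 0 ≤ aeΔ i)
    (hbfΔ : ∀ i, 0 ≤ bfΔ i) (hbeΔ : ∀ i, 0 ≤ beΔ i)
    (s : Fin n' → ℝ) (hs : ∀ j, s j = 1 ∨ s j = -1)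
    (x : Fin n → ℝ) (y : Fin n' → ℝ) :
    (IsAESolGen Afc AfΔ Aec AeΔ Bfc BfΔ Bec BeΔ Cfc CfΔ Cec CeΔ Dfc DfΔ Dec DeΔ
        afc afΔ aec aeΔ bfc bfΔ bec beΔ x y ∧ ∀ j, 0 ≤ s j * y j) ↔
    ∀ i : RIdx m m' n n',
      (∑ j, rowM Afc AfΔ Aec AeΔ Cfc CfΔ Cec CeΔ i j * x j)
      + (∑ j, rowN Bfc BfΔ Bec BeΔ Dfc DfΔ Dec DeΔ s i j * y j)
      ≤ rowc afc afΔ aec aeΔ bfc bfΔ bec beΔ i := by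
  rw [char_abs Afc AfΔ Aec AeΔ Bfc BfΔ Bec BeΔ Cfc CfΔ Cec CeΔ Dfc DfΔ Dec DeΔ
    afc afΔ aec aeΔ bfc bfΔ bec beΔ hAfΔ hAeΔ hBfΔ hBeΔ hCfΔ hCeΔ hDfΔ hDeΔ
    hafΔ haeΔ hbfΔ hbeΔ x y]
  have horthabs : (∀ j, 0 ≤ s j * y j) → (fun j => |y j|) = fun j => s j * y j := by
    intro horth
    funext j
    rcases hs j with h | h
    · have h0 := horth j
      rw [h, one_mul] at h0 ⊢
      exact abs_of_nonneg h0
    · have h0 := horth j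
      rw [h] at h0 ⊢
      have : y j ≤ 0 := by linarith
      rw [abs_of_nonpos this]; ring
  constructor
  · rintro ⟨⟨hEq, hIq, hXq⟩, horth⟩
    have habsx : (fun j => |x j|) = x := funext fun j => abs_of_nonneg (hXq j)
    have habsy := horthabs horth
    rw [habsx, habsy] at hEq hIq
    simp only [abs_add_le_iff] at hEq
    simp only [Matrix.mulVec, dotProduct] at hEq hIq
    intro i
    rcases i with (i0 | i0) | (i1 | (j0 | j0)) <;>
      simp only [rowM, rowN, rowc, add_mul, sub_mul, neg_mul, mul_assoc,
        Finset.sum_add_distrib, Finset.sum_sub_distrib, Finset.sum_neg_distrib]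
    · have h := (hEq i0).1; linarith
    · have h := (hEq i0).2; linarith
    · have h := hIq i1; linarith
    · have h := hXq j0
      simp [ite_mul, Finset.sum_ite_eq', Finset.mem_univ]
      linarith
    · have h := horth j0
      simp [ite_mul, Finset.sum_ite_eq', Finset.mem_univ]
      linarith
  · intro h
    have hXq : ∀ j, 0 ≤ x j := by
      intro j0
      have h0 := h (.inr (.inr (.inl j0)))
      simp only [rowM, rowN, rowc, zero_mul, Finset.sum_const_zero, ite_mul] at h0
      simp [Finset.sum_ite_eq', Finset.mem_univ] at h0
      linarith
    have horth : ∀ j, 0 ≤ s j * y j := by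
      intro j0
      have h0 := h (.inr (.inr (.inr j0)))
      simp only [rowM, rowN, rowc, zero_mul, Finset.sum_const_zero, ite_mul] at h0
      simp [Finset.sum_ite_eq', Finset.mem_univ] at h0
      linarith
    have habsx : (fun j => |x j|) = x := funext fun j => abs_of_nonneg (hXq j)
    have habsy := horthabs horth
    refine ⟨⟨?_, ?_, hXq⟩, horth⟩
    · intro i
      rw [habsx, habsy, abs_add_le_iff]
      have h1 := h (.inl (.inl i))
      have h2 := h (.inl (.inr i))
      simp only [rowM, rowN, rowc, add_mul, sub_mul, neg_mul, mul_assoc,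
        Finset.sum_add_distrib, Finset.sum_sub_distrib, Finset.sum_neg_distrib] at h1 h2
      simp only [Matrix.mulVec, dotProduct]
      constructor <;> linarith
    · intro i
      rw [habsx, habsy]
      have h1 := h (.inr (.inl i))
      simp only [rowM, rowN, rowc, add_mul, sub_mul, neg_mul, mul_assoc,
        Finset.sum_add_distrib, Finset.sum_sub_distrib, Finset.sum_neg_distrib] at h1
      simp only [Matrix.mulVec, dotProduct]
      linarith

/-- Restricted to the orthant `{y : diag(s) y ≥ 0}` for a sign vector `s`, the AE
solution set of the general interval system is a convex polyhedral set (a solution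
set of finitely many linear inequalities); hence the whole AE solution set is the
union of these at most `2^{n'}` polyhedral pieces. -/
theorem ae_solution_set_union_of_polyhedra {m n m' n' : ℕ}
    (Afc AfΔ Aec AeΔ : Matrix (Fin m) (Fin n) ℝ)
    (Bfc BfΔ Bec BeΔ : Matrix (Fin m) (Fin n') ℝ)
    (Cfc CfΔ Cec CeΔ : Matrix (Fin m') (Fin n) ℝ)
    (Dfc DfΔ Dec DeΔ : Matrix (Fin m') (Fin n') ℝ)
    (afc afΔ aec aeΔ : Fin m → ℝ)
    (bfc bfΔ bec beΔ : Fin m' → ℝ)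
    (hAfΔ : ∀ i j, 0 ≤ AfΔ i j) (hAeΔ : ∀ i j, 0 ≤ AeΔ i j)
    (hBfΔ : ∀ i j, 0 ≤ BfΔ i j) (hBeΔ : ∀ i j, 0 ≤ BeΔ i j)
    (hCfΔ : ∀ i j, 0 ≤ CfΔ i j) (hCeΔ : ∀ i j, 0 ≤ CeΔ i j)
    (hDfΔ : ∀ i j, 0 ≤ DfΔ i j) (hDeΔ : ∀ i j, 0 ≤ DeΔ i j)
    (hafΔ : ∀ i, 0 ≤ afΔ i) (haeΔ : ∀ i, 0 ≤ aeΔ i)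
    (hbfΔ : ∀ i, 0 ≤ bfΔ i) (hbeΔ : ∀ i, 0 ≤ beΔ i) :
    (∀ s : Fin n' → ℝ, (∀ j, s j = 1 ∨ s j = -1) →
      ∃ (k : ℕ) (M : Matrix (Fin k) (Fin n) ℝ) (N : Matrix (Fin k) (Fin n') ℝ)
        (c : Fin k → ℝ),
        ({p : (Fin n → ℝ) × (Fin n' → ℝ) |
            IsAESolGen Afc AfΔ Aec AeΔ Bfc BfΔ Bec BeΔ Cfc CfΔ Cec CeΔ
              Dfc DfΔ Dec DeΔ afc afΔ aec aeΔ bfc bfΔ bec beΔ p.1 p.2 ∧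
            ∀ j, 0 ≤ s j * p.2 j}
          = {p : (Fin n → ℝ) × (Fin n' → ℝ) |
              ∀ i, (M.mulVec p.1) i + (N.mulVec p.2) i ≤ c i}) ∧
        Convex ℝ {p : (Fin n → ℝ) × (Fin n' → ℝ) |
            IsAESolGen Afc AfΔ Aec AeΔ Bfc BfΔ Bec BeΔ Cfc CfΔ Cec CeΔ
              Dfc DfΔ Dec DeΔ afc afΔ aec aeΔ bfc bfΔ bec beΔ p.1 p.2 ∧
            ∀ j, 0 ≤ s j * p.2 j})
    ∧
    ({p : (Fin n → ℝ) × (Fin n' → ℝ) |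
        IsAESolGen Afc AfΔ Aec AeΔ Bfc BfΔ Bec BeΔ Cfc CfΔ Cec CeΔ
          Dfc DfΔ Dec DeΔ afc afΔ aec aeΔ bfc bfΔ bec beΔ p.1 p.2}
      = ⋃ s ∈ {s : Fin n' → ℝ | ∀ j, s j = 1 ∨ s j = -1},
          {p : (Fin n → ℝ) × (Fin n' → ℝ) |
            IsAESolGen Afc AfΔ Aec AeΔ Bfc BfΔ Bec BeΔ Cfc CfΔ Cec CeΔ
              Dfc DfΔ Dec DeΔ afc afΔ aec aeΔ bfc bfΔ bec beΔ p.1 p.2 ∧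
            ∀ j, 0 ≤ s j * p.2 j}) := by
  have hconv : ∀ (k : ℕ) (M : Matrix (Fin k) (Fin n) ℝ) (N : Matrix (Fin k) (Fin n') ℝ)
      (c : Fin k → ℝ),
      Convex ℝ {p : (Fin n → ℝ) × (Fin n' → ℝ) |
        ∀ i, (M.mulVec p.1) i + (N.mulVec p.2) i ≤ c i} := by
    intro k M N c p hp q hq a b ha hb hab
    intro i
    simp only [Set.mem_setOf_eq] at hp hq
    simp only [Prod.fst_add, Prod.snd_add, Prod.smul_fst, Prod.smul_snd,
      Matrix.mulVec_add, Matrix.mulVec_smul, Pi.add_apply, Pi.smul_apply, smul_eq_mul]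
    have h1 := mul_le_mul_of_nonneg_left (hp i) ha
    have h2 := mul_le_mul_of_nonneg_left (hq i) hb
    have h3 : a * c i + b * c i = c i := by rw [← add_mul, hab, one_mul]
    nlinarith [h1, h2, h3]
  constructor
  · intro s hs
    classical
    set k := Fintype.card (RIdx m m' n n') with hk
    set e : RIdx m m' n n' ≃ Fin k := Fintype.equivFin _ with he
    have hset : {p : (Fin n → ℝ) × (Fin n' → ℝ) |
          IsAESolGen Afc AfΔ Aec AeΔ Bfc BfΔ Bec BeΔ Cfc CfΔ Cec CeΔ
            Dfc DfΔ Dec DeΔ afc afΔ aec aeΔ bfc bfΔ bec beΔ p.1 p.2 ∧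
          ∀ j, 0 ≤ s j * p.2 j}
        = {p : (Fin n → ℝ) × (Fin n' → ℝ) |
            ∀ i, ((Matrix.of fun i => rowM Afc AfΔ Aec AeΔ Cfc CfΔ Cec CeΔ
                (e.symm i)).mulVec p.1) i
              + ((Matrix.of fun i => rowN Bfc BfΔ Bec BeΔ Dfc DfΔ Dec DeΔ s
                (e.symm i)).mulVec p.2) i
              ≤ rowc afc afΔ aec aeΔ bfc bfΔ bec beΔ (e.symm i)} := by
      ext p
      simp only [Set.mem_setOf_eq]
      rw [char_lin Afc AfΔ Aec AeΔ Bfc BfΔ Bec BeΔ Cfc CfΔ Cec CeΔ Dfc DfΔ Dec DeΔ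
        afc afΔ aec aeΔ bfc bfΔ bec beΔ hAfΔ hAeΔ hBfΔ hBeΔ hCfΔ hCeΔ hDfΔ hDeΔ
        hafΔ haeΔ hbfΔ hbeΔ s hs p.1 p.2]
      constructor
      · intro h i
        have h0 := h (e.symm i)
        simp only [Matrix.mulVec, dotProduct, Matrix.of_apply]
        exact h0
      · intro h i
        have h0 := h (e i)
        simp only [Matrix.mulVec, dotProduct, Matrix.of_apply,
          Equiv.symm_apply_apply] at h0
        exact h0
    refine ⟨k, Matrix.of (fun i => rowM Afc AfΔ Aec AeΔ Cfc CfΔ Cec CeΔ (e.symm i)),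
      Matrix.of (fun i => rowN Bfc BfΔ Bec BeΔ Dfc DfΔ Dec DeΔ s (e.symm i)),
      fun i => rowc afc afΔ aec aeΔ bfc bfΔ bec beΔ (e.symm i), hset, ?_⟩
    rw [hset]
    exact hconv k _ _ _
  · ext p
    simp only [Set.mem_setOf_eq, Set.mem_iUnion]
    constructor
    · intro hsol
      refine ⟨fun j => if 0 ≤ p.2 j then 1 else -1, fun j => ?_, hsol, fun j => ?_⟩
      · by_cases h : 0 ≤ p.2 j <;> simp [h]
      · by_cases h : 0 ≤ p.2 j
        · simp only [h, if_true, one_mul]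
        · simp only [h, if_false, neg_one_mul]
          push_neg at h
          linarith
    · rintro ⟨s, hs, hsol, -⟩
      exact hsol
end

section
/- A pair (x, y) is an AE solution of the general interval system 𝐀x + 𝐁y = 𝐚, 𝐂x + 𝐃y ≤ 𝐛, x ≥ 0 if and only if x ≥ 0 and |A_c x + B_c y − a_c| ≤ (A∃_Δ − A∀_Δ)x + (B∃_Δ − B∀_Δ)|y| + a∃_Δ − a∀_Δ and C_c x + D_c y − b_c ≤ (C∃_Δ − C∀_Δ)x + (D∃_Δ − D∀_Δ)|y| + b∃_Δ − b∀_Δ. -/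
/-!
Fix `(x, y)`. In each row `i`, the ∀-coefficients produce the residual `(A∀x + B∀y - a∀)_i`,
and as the coefficients range over their intervals this residual fills exactly the interval
with centre `(A∀_c x + B∀_c y - a∀_c)_i` and radius `(A∀_Δ|x| + B∀_Δ|y| + a∀_Δ)_i`; the
∃-coefficients likewise fill an interval, and rows can be chosen independently. So the
equations are AE-solvable iff the negated ∀-interval lies in the ∃-interval, and the
inequalities iff the top of the ∀-interval plus the bottom of the ∃-interval is `≤ 0`.
-/

open Matrix

theorem exists_abs_eq_one_mul_abs_eq (r : ℝ) : ∃ s : ℝ, |s| = 1 ∧ s * |r| = r := by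
  rcases le_total 0 r with hr | hr
  · exact ⟨1, by simp, by simp [abs_of_nonneg hr]⟩
  · exact ⟨-1, by simp, by simp [abs_of_nonpos hr]⟩

theorem exists_abs_le_one_mul_eq {e r : ℝ} (h : |e| ≤ r) : ∃ s : ℝ, |s| ≤ 1 ∧ s * r = e := by
  have hr : 0 ≤ r := (abs_nonneg e).trans h
  refine ⟨e / r, ?_, ?_⟩
  · rw [abs_div, abs_of_nonneg hr]
    exact div_le_one_of_le₀ h hr
  · rcases eq_or_ne r 0 with rfl | hr0
    · simp [abs_nonpos_iff.mp h]
    · exact div_mul_cancel₀ e hr0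

section IntervalMatrix

variable {m n : Type*} [Fintype n]

theorem mulVec_abs_nonneg_s9 {AΔ : Matrix m n ℝ} (hAΔ : ∀ i j, 0 ≤ AΔ i j) (z : n → ℝ) (i : m) :
    0 ≤ (AΔ *ᵥ fun j => |z j|) i :=
  Finset.sum_nonneg fun j _ => mul_nonneg (hAΔ i j) (abs_nonneg _)

theorem abs_mulVec_sub_mulVec_le {A Ac AΔ : Matrix m n ℝ} (hA : ∀ i j, |A i j - Ac i j| ≤ AΔ i j)
    (z : n → ℝ) (i : m) : |(A *ᵥ z) i - (Ac *ᵥ z) i| ≤ (AΔ *ᵥ fun j => |z j|) i := by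
  rw [← Pi.sub_apply, ← sub_mulVec]
  calc |∑ j, (A - Ac) i j * z j| ≤ ∑ j, |(A - Ac) i j * z j| := Finset.abs_sum_le_sum_abs _ _
    _ ≤ ∑ j, AΔ i j * |z j| := Finset.sum_le_sum fun j _ => by
      rw [abs_mul]
      exact mul_le_mul_of_nonneg_right (hA i j) (abs_nonneg _)

theorem exists_mulVec_eq_add_mul (Ac : Matrix m n ℝ) {AΔ : Matrix m n ℝ}
    (hAΔ : ∀ i j, 0 ≤ AΔ i j) (z : n → ℝ) {s : m → ℝ} (hs : ∀ i, |s i| ≤ 1) :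
    ∃ A : Matrix m n ℝ, (∀ i j, |A i j - Ac i j| ≤ AΔ i j) ∧
      ∀ i, (A *ᵥ z) i = (Ac *ᵥ z) i + s i * (AΔ *ᵥ fun j => |z j|) i := by
  choose σ hσ hσz using fun j => exists_abs_eq_one_mul_abs_eq (z j)
  refine ⟨Ac + of fun i j => s i * AΔ i j * σ j, fun i j => ?_, fun i => ?_⟩
  · rw [Matrix.add_apply, add_sub_cancel_left, of_apply, abs_mul, hσ, mul_one, abs_mul,
      abs_of_nonneg (hAΔ i j)]
    exact mul_le_of_le_one_left (hAΔ i j) (hs i)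
  · rw [add_mulVec, Pi.add_apply]
    congr 1
    simp only [mulVec, dotProduct, of_apply, Finset.mul_sum]
    refine Finset.sum_congr rfl fun j _ => ?_
    have hσσ : σ j * σ j = 1 := by rw [← abs_mul_abs_self, hσ, one_mul]
    linear_combination (s i * AΔ i j * |z j|) * hσσ - s i * AΔ i j * σ j * hσz j

end IntervalMatrix

namespace IntervalSystem

variable {m n n' : Type*} [Fintype n] [Fintype n']

def residual (A : Matrix m n ℝ) (B : Matrix m n' ℝ) (a : m → ℝ) (x : n → ℝ) (y : n' → ℝ) :
    m → ℝ :=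
  A *ᵥ x + B *ᵥ y - a

def radius (AΔ : Matrix m n ℝ) (BΔ : Matrix m n' ℝ) (aΔ : m → ℝ) (x : n → ℝ) (y : n' → ℝ) :
    m → ℝ :=
  (AΔ *ᵥ fun j => |x j|) + (BΔ *ᵥ fun j => |y j|) + aΔ

theorem residual_add (A A' : Matrix m n ℝ) (B B' : Matrix m n' ℝ) (a a' : m → ℝ)
    (x : n → ℝ) (y : n' → ℝ) :
    residual (A + A') (B + B') (a + a') x y = residual A B a x y + residual A' B' a' x y := by
  simp only [residual, add_mulVec]
  abel

theorem radius_sub (AΔ AΔ' : Matrix m n ℝ) (BΔ BΔ' : Matrix m n' ℝ) (aΔ aΔ' : m → ℝ)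
    (x : n → ℝ) (y : n' → ℝ) :
    radius (AΔ - AΔ') (BΔ - BΔ') (aΔ - aΔ') x y = radius AΔ BΔ aΔ x y - radius AΔ' BΔ' aΔ' x y := by
  simp only [radius, sub_mulVec]
  abel

theorem radius_nonneg {AΔ : Matrix m n ℝ} {BΔ : Matrix m n' ℝ} {aΔ : m → ℝ}
    (hAΔ : ∀ i j, 0 ≤ AΔ i j) (hBΔ : ∀ i j, 0 ≤ BΔ i j) (haΔ : ∀ i, 0 ≤ aΔ i)
    (x : n → ℝ) (y : n' → ℝ) (i : m) : 0 ≤ radius AΔ BΔ aΔ x y i :=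
  add_nonneg (add_nonneg (mulVec_abs_nonneg_s9 hAΔ x i) (mulVec_abs_nonneg_s9 hBΔ y i)) (haΔ i)

theorem abs_residual_sub_le {A Ac AΔ : Matrix m n ℝ} {B Bc BΔ : Matrix m n' ℝ}
    {a ac aΔ : m → ℝ} (hA : ∀ i j, |A i j - Ac i j| ≤ AΔ i j)
    (hB : ∀ i j, |B i j - Bc i j| ≤ BΔ i j) (ha : ∀ i, |a i - ac i| ≤ aΔ i)
    (x : n → ℝ) (y : n' → ℝ) (i : m) :
    |residual A B a x y i - residual Ac Bc ac x y i| ≤ radius AΔ BΔ aΔ x y i :=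
  calc _ = |((A *ᵥ x) i - (Ac *ᵥ x) i) + ((B *ᵥ y) i - (Bc *ᵥ y) i) + (ac i - a i)| := by
        simp only [residual, Pi.sub_apply, Pi.add_apply]; ring_nf
    _ ≤ _ := (abs_add_three _ _ _).trans <| add_le_add_three
        (abs_mulVec_sub_mulVec_le hA x i) (abs_mulVec_sub_mulVec_le hB y i)
        (abs_sub_comm (ac i) (a i) ▸ ha i)

theorem exists_residual_eq (Ac : Matrix m n ℝ) {AΔ : Matrix m n ℝ} (Bc : Matrix m n' ℝ)
    {BΔ : Matrix m n' ℝ} (ac : m → ℝ) {aΔ : m → ℝ}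
    (hAΔ : ∀ i j, 0 ≤ AΔ i j) (hBΔ : ∀ i j, 0 ≤ BΔ i j) (haΔ : ∀ i, 0 ≤ aΔ i)
    (x : n → ℝ) (y : n' → ℝ) {v : m → ℝ}
    (hv : ∀ i, |v i - residual Ac Bc ac x y i| ≤ radius AΔ BΔ aΔ x y i) :
    ∃ A : Matrix m n ℝ, (∀ i j, |A i j - Ac i j| ≤ AΔ i j) ∧
      ∃ B : Matrix m n' ℝ, (∀ i j, |B i j - Bc i j| ≤ BΔ i j) ∧
      ∃ a : m → ℝ, (∀ i, |a i - ac i| ≤ aΔ i) ∧ residual A B a x y = v := by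
  choose s hs hsv using fun i => exists_abs_le_one_mul_eq (hv i)
  obtain ⟨A, hA, hAx⟩ := exists_mulVec_eq_add_mul Ac hAΔ x hs
  obtain ⟨B, hB, hBy⟩ := exists_mulVec_eq_add_mul Bc hBΔ y hs
  refine ⟨A, hA, B, hB, fun i => ac i - s i * aΔ i, fun i => ?_, funext fun i => ?_⟩
  · rw [sub_sub_cancel_left, abs_neg, abs_mul, abs_of_nonneg (haΔ i)]
    exact mul_le_of_le_one_left (haΔ i) (hs i)
  · simp only [residual, radius, Pi.sub_apply, Pi.add_apply, hAx, hBy] at hsv ⊢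
    linear_combination hsv i

def IsAESol (R : (m → ℝ) → (m → ℝ) → Prop)
    (Afc AfΔ Aec AeΔ : Matrix m n ℝ) (Bfc BfΔ Bec BeΔ : Matrix m n' ℝ)
    (afc afΔ aec aeΔ : m → ℝ) (x : n → ℝ) (y : n' → ℝ) : Prop :=
  ∀ Af : Matrix m n ℝ, (∀ i j, |Af i j - Afc i j| ≤ AfΔ i j) →
  ∀ Bf : Matrix m n' ℝ, (∀ i j, |Bf i j - Bfc i j| ≤ BfΔ i j) →
  ∀ af : m → ℝ, (∀ i, |af i - afc i| ≤ afΔ i) →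
  ∃ Ae : Matrix m n ℝ, (∀ i j, |Ae i j - Aec i j| ≤ AeΔ i j) ∧
  ∃ Be : Matrix m n' ℝ, (∀ i j, |Be i j - Bec i j| ≤ BeΔ i j) ∧
  ∃ ae : m → ℝ, (∀ i, |ae i - aec i| ≤ aeΔ i) ∧
    R ((Af + Ae) *ᵥ x + (Bf + Be) *ᵥ y) (af + ae)

section

variable {Afc AfΔ Aec AeΔ : Matrix m n ℝ} {Bfc BfΔ Bec BeΔ : Matrix m n' ℝ}
  {afc afΔ aec aeΔ : m → ℝ} {x : n → ℝ} {y : n' → ℝ}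

theorem isAESol_eq_iff
    (hAfΔ : ∀ i j, 0 ≤ AfΔ i j) (hBfΔ : ∀ i j, 0 ≤ BfΔ i j) (hafΔ : ∀ i, 0 ≤ afΔ i)
    (hAeΔ : ∀ i j, 0 ≤ AeΔ i j) (hBeΔ : ∀ i j, 0 ≤ BeΔ i j) (haeΔ : ∀ i, 0 ≤ aeΔ i) :
    IsAESol (· = ·) Afc AfΔ Aec AeΔ Bfc BfΔ Bec BeΔ afc afΔ aec aeΔ x y ↔
      ∀ i, |residual (Afc + Aec) (Bfc + Bec) (afc + aec) x y i| ≤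
        radius (AeΔ - AfΔ) (BeΔ - BfΔ) (aeΔ - afΔ) x y i := by
  simp only [residual_add, radius_sub, Pi.add_apply, Pi.sub_apply, le_sub_iff_add_le]
  constructor
  · intro h
    choose s hs hsc using fun i =>
      exists_abs_eq_one_mul_abs_eq (residual Afc Bfc afc x y i + residual Aec Bec aec x y i)
    -- worst case: each row's ∀-residual sits at the end of its interval farthest from
    -- `-residual ∃_c`, so the ∃-part must cover a distance `|c_i| + radius ∀_i`
    obtain ⟨Af, hAf, Bf, hBf, af, haf, hF⟩ := exists_residual_eq Afc Bfc afc hAfΔ hBfΔ hafΔ x y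
      (v := residual Afc Bfc afc x y + s * radius AfΔ BfΔ afΔ x y) fun i => by
        rw [Pi.add_apply, add_sub_cancel_left, Pi.mul_apply, abs_mul, hs, one_mul,
          abs_of_nonneg (radius_nonneg hAfΔ hBfΔ hafΔ x y i)]
    obtain ⟨Ae, hAe, Be, hBe, ae, hae, heq⟩ := h Af hAf Bf hBf af haf
    have hFE : residual Af Bf af x y + residual Ae Be ae x y = 0 := by
      rw [← residual_add, residual, heq, sub_self]
    intro i
    have hEi : residual Ae Be ae x y i - residual Aec Bec aec x y i =
        -(s i * (|residual Afc Bfc afc x y i + residual Aec Bec aec x y i| +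
          radius AfΔ BfΔ afΔ x y i)) := by
      have hFEi := congrFun hFE i
      have hFi := congrFun hF i
      simp only [Pi.add_apply, Pi.mul_apply, Pi.zero_apply] at hFEi hFi
      linear_combination hFEi - hFi + hsc i
    calc _ = |residual Ae Be ae x y i - residual Aec Bec aec x y i| := by
          rw [hEi, abs_neg, abs_mul, hs, one_mul,
            abs_of_nonneg (add_nonneg (abs_nonneg _) (radius_nonneg hAfΔ hBfΔ hafΔ x y i))]
      _ ≤ _ := abs_residual_sub_le hAe hBe hae x y i
  · intro hc Af hAf Bf hBf af haf
    obtain ⟨Ae, hAe, Be, hBe, ae, hae, hE⟩ := exists_residual_eq Aec Bec aec hAeΔ hBeΔ haeΔ x y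
      (v := -residual Af Bf af x y) fun i =>
        calc _ = |(residual Af Bf af x y i - residual Afc Bfc afc x y i) +
              (residual Afc Bfc afc x y i + residual Aec Bec aec x y i)| := by
              rw [Pi.neg_apply, ← abs_neg]; ring_nf
          _ ≤ _ := (abs_add_le _ _).trans
              (add_le_add (abs_residual_sub_le hAf hBf haf x y i) le_rfl)
          _ ≤ _ := by linarith [hc i]
    refine ⟨Ae, hAe, Be, hBe, ae, hae, sub_eq_zero.mp ?_⟩
    change residual (Af + Ae) (Bf + Be) (af + ae) x y = 0
    rw [residual_add, hE, add_neg_cancel]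

theorem isAESol_le_iff
    (hAfΔ : ∀ i j, 0 ≤ AfΔ i j) (hBfΔ : ∀ i j, 0 ≤ BfΔ i j) (hafΔ : ∀ i, 0 ≤ afΔ i)
    (hAeΔ : ∀ i j, 0 ≤ AeΔ i j) (hBeΔ : ∀ i j, 0 ≤ BeΔ i j) (haeΔ : ∀ i, 0 ≤ aeΔ i) :
    IsAESol (· ≤ ·) Afc AfΔ Aec AeΔ Bfc BfΔ Bec BeΔ afc afΔ aec aeΔ x y ↔
      ∀ i, residual (Afc + Aec) (Bfc + Bec) (afc + aec) x y i ≤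
        radius (AeΔ - AfΔ) (BeΔ - BfΔ) (aeΔ - afΔ) x y i := by
  simp only [residual_add, radius_sub, Pi.add_apply, Pi.sub_apply]
  constructor
  · intro h i
    obtain ⟨Af, hAf, Bf, hBf, af, haf, hF⟩ := exists_residual_eq Afc Bfc afc hAfΔ hBfΔ hafΔ x y
      (v := residual Afc Bfc afc x y + radius AfΔ BfΔ afΔ x y) fun i => by
        rw [Pi.add_apply, add_sub_cancel_left, abs_of_nonneg (radius_nonneg hAfΔ hBfΔ hafΔ x y i)]
    obtain ⟨Ae, hAe, Be, hBe, ae, hae, hle⟩ := h Af hAf Bf hBf af haf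
    have hFE : residual Af Bf af x y + residual Ae Be ae x y ≤ 0 := by
      rw [← residual_add]
      exact sub_nonpos.mpr hle
    have hE := (abs_le.mp (abs_residual_sub_le hAe hBe hae x y i)).1
    have hFEi := hFE i
    have hFi := congrFun hF i
    simp only [Pi.add_apply, Pi.zero_apply] at hFEi hFi
    linarith
  · intro hc Af hAf Bf hBf af haf
    obtain ⟨Ae, hAe, Be, hBe, ae, hae, hE⟩ := exists_residual_eq Aec Bec aec hAeΔ hBeΔ haeΔ x y
      (v := residual Aec Bec aec x y - radius AeΔ BeΔ aeΔ x y) fun i => by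
        rw [Pi.sub_apply, sub_sub_cancel_left, abs_neg,
          abs_of_nonneg (radius_nonneg hAeΔ hBeΔ haeΔ x y i)]
    refine ⟨Ae, hAe, Be, hBe, ae, hae, sub_nonpos.mp ?_⟩
    change residual (Af + Ae) (Bf + Be) (af + ae) x y ≤ 0
    intro i
    have hF := (abs_le.mp (abs_residual_sub_le hAf hBf haf x y i)).2
    rw [residual_add, hE]
    simp only [Pi.add_apply, Pi.sub_apply, Pi.zero_apply]
    linarith [hc i]

end

end IntervalSystem

open IntervalSystem

theorem isAESolGen_iff {m n m' n' : ℕ}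
    {Afc AfΔ Aec AeΔ : Matrix (Fin m) (Fin n) ℝ} {Bfc BfΔ Bec BeΔ : Matrix (Fin m) (Fin n') ℝ}
    {Cfc CfΔ Cec CeΔ : Matrix (Fin m') (Fin n) ℝ} {Dfc DfΔ Dec DeΔ : Matrix (Fin m') (Fin n') ℝ}
    {afc afΔ aec aeΔ : Fin m → ℝ} {bfc bfΔ bec beΔ : Fin m' → ℝ}
    (hAfΔ : ∀ i j, 0 ≤ AfΔ i j) (hBfΔ : ∀ i j, 0 ≤ BfΔ i j)
    (hCfΔ : ∀ i j, 0 ≤ CfΔ i j) (hDfΔ : ∀ i j, 0 ≤ DfΔ i j)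
    (hafΔ : ∀ i, 0 ≤ afΔ i) (hbfΔ : ∀ i, 0 ≤ bfΔ i) (x : Fin n → ℝ) (y : Fin n' → ℝ) :
    IsAESolGen Afc AfΔ Aec AeΔ Bfc BfΔ Bec BeΔ Cfc CfΔ Cec CeΔ
      Dfc DfΔ Dec DeΔ afc afΔ aec aeΔ bfc bfΔ bec beΔ x y ↔
    (∀ j, 0 ≤ x j) ∧ IsAESol (· = ·) Afc AfΔ Aec AeΔ Bfc BfΔ Bec BeΔ afc afΔ aec aeΔ x y ∧
      IsAESol (· ≤ ·) Cfc CfΔ Cec CeΔ Dfc DfΔ Dec DeΔ bfc bfΔ bec beΔ x y := by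
  have hAc : ∀ i j, |Afc i j - Afc i j| ≤ AfΔ i j := by simpa using hAfΔ
  have hBc : ∀ i j, |Bfc i j - Bfc i j| ≤ BfΔ i j := by simpa using hBfΔ
  have hCc : ∀ i j, |Cfc i j - Cfc i j| ≤ CfΔ i j := by simpa using hCfΔ
  have hDc : ∀ i j, |Dfc i j - Dfc i j| ≤ DfΔ i j := by simpa using hDfΔ
  have hac : ∀ i, |afc i - afc i| ≤ afΔ i := by simpa using hafΔ
  have hbc : ∀ i, |bfc i - bfc i| ≤ bfΔ i := by simpa using hbfΔ
  constructor
  · intro h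
    refine ⟨?_, fun Af hAf Bf hBf af haf => ?_, fun Cf hCf Df hDf bf hbf => ?_⟩
    · obtain ⟨-, -, -, -, -, -, -, -, -, -, -, -, -, -, hx⟩ :=
        h Afc hAc Bfc hBc Cfc hCc Dfc hDc afc hac bfc hbc
      exact hx
    · obtain ⟨Ae, hAe, Be, hBe, -, -, -, -, ae, hae, -, -, heq, -⟩ :=
        h Af hAf Bf hBf Cfc hCc Dfc hDc af haf bfc hbc
      exact ⟨Ae, hAe, Be, hBe, ae, hae, heq⟩
    · obtain ⟨-, -, -, -, Ce, hCe, De, hDe, -, -, be, hbe, -, hle, -⟩ :=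
        h Afc hAc Bfc hBc Cf hCf Df hDf afc hac bf hbf
      exact ⟨Ce, hCe, De, hDe, be, hbe, hle⟩
  · rintro ⟨hx, hEq, hLe⟩ Af hAf Bf hBf Cf hCf Df hDf af haf bf hbf
    obtain ⟨Ae, hAe, Be, hBe, ae, hae, heq⟩ := hEq Af hAf Bf hBf af haf
    obtain ⟨Ce, hCe, De, hDe, be, hbe, hle⟩ := hLe Cf hCf Df hDf bf hbf
    exact ⟨Ae, hAe, Be, hBe, Ce, hCe, De, hDe, ae, hae, be, hbe, heq, hle, hx⟩

/-- Characterization of AE solutions to the general interval system. -/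
theorem ae_solution_general_iff {m n m' n' : ℕ}
    (Afc AfΔ Aec AeΔ : Matrix (Fin m) (Fin n) ℝ)
    (Bfc BfΔ Bec BeΔ : Matrix (Fin m) (Fin n') ℝ)
    (Cfc CfΔ Cec CeΔ : Matrix (Fin m') (Fin n) ℝ)
    (Dfc DfΔ Dec DeΔ : Matrix (Fin m') (Fin n') ℝ)
    (afc afΔ aec aeΔ : Fin m → ℝ)
    (bfc bfΔ bec beΔ : Fin m' → ℝ)
    (hAfΔ : ∀ i j, 0 ≤ AfΔ i j) (hAeΔ : ∀ i j, 0 ≤ AeΔ i j)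
    (hBfΔ : ∀ i j, 0 ≤ BfΔ i j) (hBeΔ : ∀ i j, 0 ≤ BeΔ i j)
    (hCfΔ : ∀ i j, 0 ≤ CfΔ i j) (hCeΔ : ∀ i j, 0 ≤ CeΔ i j)
    (hDfΔ : ∀ i j, 0 ≤ DfΔ i j) (hDeΔ : ∀ i j, 0 ≤ DeΔ i j)
    (hafΔ : ∀ i, 0 ≤ afΔ i) (haeΔ : ∀ i, 0 ≤ aeΔ i)
    (hbfΔ : ∀ i, 0 ≤ bfΔ i) (hbeΔ : ∀ i, 0 ≤ beΔ i)
    (x : Fin n → ℝ) (y : Fin n' → ℝ) :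
    IsAESolGen Afc AfΔ Aec AeΔ Bfc BfΔ Bec BeΔ Cfc CfΔ Cec CeΔ
      Dfc DfΔ Dec DeΔ afc afΔ aec aeΔ bfc bfΔ bec beΔ x y
    ↔
    ((∀ j, 0 ≤ x j) ∧
     (∀ i, |((Afc + Aec).mulVec x) i + ((Bfc + Bec).mulVec y) i - (afc i + aec i)| ≤
        ((AeΔ - AfΔ).mulVec x) i + ((BeΔ - BfΔ).mulVec (fun j => |y j|)) i
          + (aeΔ i - afΔ i)) ∧
     (∀ i, ((Cfc + Cec).mulVec x) i + ((Dfc + Dec).mulVec y) i - (bfc i + bec i) ≤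
        ((CeΔ - CfΔ).mulVec x) i + ((DeΔ - DfΔ).mulVec (fun j => |y j|)) i
          + (beΔ i - bfΔ i))) := by
  rw [isAESolGen_iff hAfΔ hBfΔ hCfΔ hDfΔ hafΔ hbfΔ]
  refine and_congr_right fun hx => ?_
  have habs : (fun j => |x j|) = x := funext fun j => abs_of_nonneg (hx j)
  rw [isAESol_eq_iff hAfΔ hBfΔ hafΔ hAeΔ hBeΔ haeΔ, isAESol_le_iff hCfΔ hDfΔ hbfΔ hCeΔ hDeΔ hbeΔ]
  simp only [IntervalSystem.residual, radius, habs, Pi.add_apply, Pi.sub_apply]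
end

section
/- If in the general interval system 𝐀x + 𝐁y = 𝐚, 𝐂x + 𝐃y ≤ 𝐛, x ≥ 0 the ∃-parts of 𝐁 and 𝐃 have zero radius (B∃_Δ = 0 and D∃_Δ = 0), then the AE solution set equals the projection onto (x,y) of the polyhedron in variables (x, y, z) given by: A_c x + B_c y − a_c + B∀_Δ z ≤ (A∃_Δ − A∀_Δ)x + a∃_Δ − a∀_Δ, −A_c x − B_c y + a_c + B∀_Δ z ≤ (A∃_Δ − A∀_Δ)x + a∃_Δ − a∀_Δ, C_c x + D_c y − b_c + D∀_Δ z ≤ (C∃_Δ − C∀_Δ)x + b∃_Δ − b∀_Δ, x ≥ 0, y ≤ z, −y ≤ z. -/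
private lemma absRowBound {m k : ℕ} (M Mc MΔ : Matrix (Fin m) (Fin k) ℝ) (y zz : Fin k → ℝ)
    (hM : ∀ i j, |M i j - Mc i j| ≤ MΔ i j) (hy : ∀ j, |y j| ≤ zz j) (i : Fin m) :
    |M.mulVec y i - Mc.mulVec y i| ≤ MΔ.mulVec zz i := by
  simp only [Matrix.mulVec, dotProduct]
  rw [← Finset.sum_sub_distrib]
  refine (Finset.abs_sum_le_sum_abs _ _).trans (Finset.sum_le_sum fun j _ => ?_)
  rw [← sub_mul, abs_mul]
  exact mul_le_mul (hM i j) (hy j) (abs_nonneg _) ((abs_nonneg _).trans (hM i j))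

private lemma mulVecNonneg {m k : ℕ} (M : Matrix (Fin m) (Fin k) ℝ) (x : Fin k → ℝ)
    (hM : ∀ i j, 0 ≤ M i j) (hx : ∀ j, 0 ≤ x j) (i : Fin m) : 0 ≤ M.mulVec x i := by
  simp only [Matrix.mulVec, dotProduct]
  exact Finset.sum_nonneg fun j _ => mul_nonneg (hM i j) (hx j)

private lemma mulVec_rowScale {m k : ℕ} (Mc MΔ : Matrix (Fin m) (Fin k) ℝ)
    (t : Fin m → ℝ) (x : Fin k → ℝ) (i : Fin m) :
    (Matrix.of fun i j => Mc i j + t i * MΔ i j).mulVec x i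
      = Mc.mulVec x i + t i * MΔ.mulVec x i := by
  simp only [Matrix.mulVec, dotProduct, Matrix.of_apply, add_mul,
    Finset.sum_add_distrib, Finset.mul_sum]
  congr 1
  exact Finset.sum_congr rfl fun j _ => by ring

private lemma mulVec_colScale {m k : ℕ} (Mc MΔ : Matrix (Fin m) (Fin k) ℝ)
    (σ : ℝ) (e y : Fin k → ℝ) (i : Fin m) :
    (Matrix.of fun i j => Mc i j + σ * (MΔ i j * e j)).mulVec y i
      = Mc.mulVec y i + σ * MΔ.mulVec (fun j => e j * y j) i := by
  simp only [Matrix.mulVec, dotProduct, Matrix.of_apply, add_mul,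
    Finset.sum_add_distrib, Finset.mul_sum]
  congr 1
  exact Finset.sum_congr rfl fun j _ => by ring

private lemma myEqOfAbs {a b : ℝ} (h : |a - b| ≤ 0) : a = b :=
  sub_eq_zero.mp (abs_eq_zero.mp (le_antisymm h (abs_nonneg _)))

/-- If the ∃-parts of `𝐁` and `𝐃` have zero radius, the AE solution set is the
projection onto `(x,y)` of an explicit polyhedron in `(x,y,z)`. -/
theorem ae_solution_set_projection {m n m' n' : ℕ}
    (Afc AfΔ Aec AeΔ : Matrix (Fin m) (Fin n) ℝ)
    (Bfc BfΔ Bec BeΔ : Matrix (Fin m) (Fin n') ℝ)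
    (Cfc CfΔ Cec CeΔ : Matrix (Fin m') (Fin n) ℝ)
    (Dfc DfΔ Dec DeΔ : Matrix (Fin m') (Fin n') ℝ)
    (afc afΔ aec aeΔ : Fin m → ℝ)
    (bfc bfΔ bec beΔ : Fin m' → ℝ)
    (hAfΔ : ∀ i j, 0 ≤ AfΔ i j) (hAeΔ : ∀ i j, 0 ≤ AeΔ i j)
    (hBfΔ : ∀ i j, 0 ≤ BfΔ i j)
    (hCfΔ : ∀ i j, 0 ≤ CfΔ i j) (hCeΔ : ∀ i j, 0 ≤ CeΔ i j)
    (hDfΔ : ∀ i j, 0 ≤ DfΔ i j)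
    (hafΔ : ∀ i, 0 ≤ afΔ i) (haeΔ : ∀ i, 0 ≤ aeΔ i)
    (hbfΔ : ∀ i, 0 ≤ bfΔ i) (hbeΔ : ∀ i, 0 ≤ beΔ i)
    (hBeΔ : BeΔ = 0) (hDeΔ : DeΔ = 0) :
    {p : (Fin n → ℝ) × (Fin n' → ℝ) |
        IsAESolGen Afc AfΔ Aec AeΔ Bfc BfΔ Bec BeΔ Cfc CfΔ Cec CeΔ
          Dfc DfΔ Dec DeΔ afc afΔ aec aeΔ bfc bfΔ bec beΔ p.1 p.2}
    = {p : (Fin n → ℝ) × (Fin n' → ℝ) | ∃ z : Fin n' → ℝ,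
        (∀ i, ((Afc + Aec).mulVec p.1) i + ((Bfc + Bec).mulVec p.2) i
            - (afc i + aec i) + (BfΔ.mulVec z) i ≤
          ((AeΔ - AfΔ).mulVec p.1) i + (aeΔ i - afΔ i)) ∧
        (∀ i, -(((Afc + Aec).mulVec p.1) i) - ((Bfc + Bec).mulVec p.2) i
            + (afc i + aec i) + (BfΔ.mulVec z) i ≤
          ((AeΔ - AfΔ).mulVec p.1) i + (aeΔ i - afΔ i)) ∧
        (∀ i, ((Cfc + Cec).mulVec p.1) i + ((Dfc + Dec).mulVec p.2) i
            - (bfc i + bec i) + (DfΔ.mulVec z) i ≤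
          ((CeΔ - CfΔ).mulVec p.1) i + (beΔ i - bfΔ i)) ∧
        (∀ j, 0 ≤ p.1 j) ∧ (∀ j, p.2 j ≤ z j) ∧ (∀ j, -(p.2 j) ≤ z j)} := by
  ext p
  obtain ⟨x, y⟩ := p
  simp only [Set.mem_setOf_eq]
  constructor
  · intro h
    unfold IsAESolGen at h
    classical
    set e : Fin n' → ℝ := fun j => if 0 ≤ y j then (1:ℝ) else -1 with he_def
    have hey : (fun j => e j * y j) = fun j => |y j| := by
      funext j
      simp only [he_def]
      split_ifs with hj
      · rw [one_mul, abs_of_nonneg hj]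
      · rw [abs_of_neg (lt_of_not_ge hj)]; ring
    have heb : ∀ j, |e j| ≤ 1 := by
      intro j; simp only [he_def]; split_ifs <;> simp
    have hAfc : ∀ i j, |Afc i j - Afc i j| ≤ AfΔ i j := fun i j => by simpa using hAfΔ i j
    have hBfc : ∀ i j, |Bfc i j - Bfc i j| ≤ BfΔ i j := fun i j => by simpa using hBfΔ i j
    have hCfc : ∀ i j, |Cfc i j - Cfc i j| ≤ CfΔ i j := fun i j => by simpa using hCfΔ i j
    have hDfc : ∀ i j, |Dfc i j - Dfc i j| ≤ DfΔ i j := fun i j => by simpa using hDfΔ i j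
    have hafc : ∀ i, |afc i - afc i| ≤ afΔ i := fun i => by simpa using hafΔ i
    have hbfc : ∀ i, |bfc i - bfc i| ≤ bfΔ i := fun i => by simpa using hbfΔ i
    -- x ≥ 0 from any instantiation
    obtain ⟨_, _, _, _, _, _, _, _, _, _, _, _, _, _, hx⟩ :=
      h Afc hAfc Bfc hBfc Cfc hCfc Dfc hDfc afc hafc bfc hbfc
    have hxabs : ∀ j, |x j| ≤ x j := fun j => by rw [abs_of_nonneg (hx j)]
    have hBfσ : ∀ σ : ℝ, |σ| ≤ 1 → ∀ i j,
        |(Matrix.of fun i j => Bfc i j + σ * (BfΔ i j * e j)) i j - Bfc i j| ≤ BfΔ i j := by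
      intro σ hσ i j
      simp only [Matrix.of_apply, add_sub_cancel_left, abs_mul]
      rw [abs_of_nonneg (hBfΔ i j)]
      calc |σ| * (BfΔ i j * |e j|) ≤ 1 * (BfΔ i j * |e j|) :=
            mul_le_mul_of_nonneg_right hσ (mul_nonneg (hBfΔ i j) (abs_nonneg _))
        _ = BfΔ i j * |e j| := one_mul _
        _ ≤ BfΔ i j * 1 := mul_le_mul_of_nonneg_left (heb j) (hBfΔ i j)
        _ = BfΔ i j := mul_one _
    refine ⟨fun j => |y j|, ?_, ?_, ?_, hx, fun j => le_abs_self _, fun j => neg_le_abs _⟩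
    -- family 1
    · have hAf1 : ∀ i j, |(Afc + AfΔ) i j - Afc i j| ≤ AfΔ i j := fun i j => by
        simp [abs_of_nonneg (hAfΔ i j)]
      have haf1 : ∀ i, |(afc - afΔ) i - afc i| ≤ afΔ i := fun i => by
        simp [abs_of_nonneg (hafΔ i)]
      obtain ⟨Ae, hAe, Be, hBe, Ce, hCe, De, hDe, ae, hae, be, hbe, heq, hineq, -⟩ :=
        h (Afc + AfΔ) hAf1 (Matrix.of fun i j => Bfc i j + 1 * (BfΔ i j * e j))
          (hBfσ 1 (by norm_num)) Cfc hCfc Dfc hDfc (afc - afΔ) haf1 bfc hbfc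
      have hBe' : Be = Bec := by
        funext i j
        exact myEqOfAbs (by simpa [hBeΔ] using hBe i j)
      subst hBe'
      intro i
      have hi := congrFun heq i
      simp only [Matrix.add_mulVec, Pi.add_apply, Pi.sub_apply, mulVec_colScale, hey] at hi
      have hA := abs_le.mp (absRowBound Ae Aec AeΔ x x hAe hxabs i)
      have ha := abs_le.mp (hae i)
      simp only [Matrix.add_mulVec, Matrix.sub_mulVec, Pi.add_apply, Pi.sub_apply]
      linarith
    -- family 2
    · have hAf2 : ∀ i j, |(Afc - AfΔ) i j - Afc i j| ≤ AfΔ i j := fun i j => by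
        simp [abs_of_nonneg (hAfΔ i j)]
      have haf2 : ∀ i, |(afc + afΔ) i - afc i| ≤ afΔ i := fun i => by
        simp [abs_of_nonneg (hafΔ i)]
      obtain ⟨Ae, hAe, Be, hBe, Ce, hCe, De, hDe, ae, hae, be, hbe, heq, hineq, -⟩ :=
        h (Afc - AfΔ) hAf2 (Matrix.of fun i j => Bfc i j + (-1) * (BfΔ i j * e j))
          (hBfσ (-1) (by norm_num)) Cfc hCfc Dfc hDfc (afc + afΔ) haf2 bfc hbfc
      have hBe' : Be = Bec := by
        funext i j
        exact myEqOfAbs (by simpa [hBeΔ] using hBe i j)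
      subst hBe'
      intro i
      have hi := congrFun heq i
      simp only [Matrix.sub_mulVec, Matrix.add_mulVec, Pi.add_apply, Pi.sub_apply,
        mulVec_colScale, hey] at hi
      have hA := abs_le.mp (absRowBound Ae Aec AeΔ x x hAe hxabs i)
      have ha := abs_le.mp (hae i)
      simp only [Matrix.add_mulVec, Matrix.sub_mulVec, Pi.add_apply, Pi.sub_apply]
      linarith
    -- family 3
    · have hCf3 : ∀ i j, |(Cfc + CfΔ) i j - Cfc i j| ≤ CfΔ i j := fun i j => by
        simp [abs_of_nonneg (hCfΔ i j)]
      have hDf3 : ∀ i j,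
          |(Matrix.of fun i j => Dfc i j + 1 * (DfΔ i j * e j)) i j - Dfc i j| ≤ DfΔ i j := by
        intro i j
        simp only [Matrix.of_apply, add_sub_cancel_left, one_mul, abs_mul]
        rw [abs_of_nonneg (hDfΔ i j)]
        calc DfΔ i j * |e j| ≤ DfΔ i j * 1 := mul_le_mul_of_nonneg_left (heb j) (hDfΔ i j)
          _ = DfΔ i j := mul_one _
      have hbf3 : ∀ i, |(bfc - bfΔ) i - bfc i| ≤ bfΔ i := fun i => by
        simp [abs_of_nonneg (hbfΔ i)]
      obtain ⟨Ae, hAe, Be, hBe, Ce, hCe, De, hDe, ae, hae, be, hbe, heq, hineq, -⟩ :=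
        h Afc hAfc Bfc hBfc (Cfc + CfΔ) hCf3
          (Matrix.of fun i j => Dfc i j + 1 * (DfΔ i j * e j)) hDf3 afc hafc (bfc - bfΔ) hbf3
      have hDe' : De = Dec := by
        funext i j
        exact myEqOfAbs (by simpa [hDeΔ] using hDe i j)
      subst hDe'
      intro i
      have hi := hineq i
      simp only [Matrix.add_mulVec, Pi.add_apply, Pi.sub_apply, mulVec_colScale, hey] at hi
      have hC := abs_le.mp (absRowBound Ce Cec CeΔ x x hCe hxabs i)
      have hb := abs_le.mp (hbe i)
      simp only [Matrix.add_mulVec, Matrix.sub_mulVec, Pi.add_apply, Pi.sub_apply]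
      linarith
  · rintro ⟨zz, h1, h2, h3, hx0, hy1, hy2⟩
    unfold IsAESolGen
    intro Af hAf Bf hBf Cf hCf Df hDf af haf bf hbf
    classical
    have hxabs : ∀ j, |x j| ≤ x j := fun j => by rw [abs_of_nonneg (hx0 j)]
    have hyz : ∀ j, |y j| ≤ zz j := fun j => abs_le.mpr ⟨by linarith [hy2 j], hy1 j⟩
    set num : Fin m → ℝ := fun i =>
      af i - Af.mulVec x i - Bf.mulVec y i - Bec.mulVec y i - Aec.mulVec x i + aec i with hnum
    set den : Fin m → ℝ := fun i => AeΔ.mulVec x i + aeΔ i with hden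
    have hden0 : ∀ i, 0 ≤ den i := fun i =>
      add_nonneg (mulVecNonneg AeΔ x hAeΔ hx0 i) (haeΔ i)
    have hkey : ∀ i, |num i| ≤ den i := by
      intro i
      have hA := abs_le.mp (absRowBound Af Afc AfΔ x x hAf hxabs i)
      have hB := abs_le.mp (absRowBound Bf Bfc BfΔ y zz hBf hyz i)
      have hai := abs_le.mp (haf i)
      have h1i := h1 i
      have h2i := h2 i
      simp only [Matrix.add_mulVec, Matrix.sub_mulVec, Pi.add_apply, Pi.sub_apply] at h1i h2i
      rw [abs_le]
      constructor <;> simp only [hnum, hden] <;> linarith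
    set t : Fin m → ℝ := fun i => num i / den i with ht
    have ht1 : ∀ i, |t i| ≤ 1 := by
      intro i
      rcases eq_or_lt_of_le (hden0 i) with hd | hd
      · have : num i = 0 := by
          have := hkey i
          rw [← hd] at this
          exact abs_eq_zero.mp (le_antisymm this (abs_nonneg _))
        simp [ht, this]
      · rw [ht]
        simp only [abs_div, abs_of_pos hd]
        exact (div_le_one hd).mpr (hkey i)
    have htden : ∀ i, t i * den i = num i := by
      intro i
      rcases eq_or_lt_of_le (hden0 i) with hd | hd
      · have hn : num i = 0 := by
          have := hkey i
          rw [← hd] at this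
          exact abs_eq_zero.mp (le_antisymm this (abs_nonneg _))
        rw [← hd, hn, mul_zero]
      · rw [ht]
        exact div_mul_cancel₀ _ (ne_of_gt hd)
    refine ⟨Matrix.of fun i j => Aec i j + t i * AeΔ i j, ?_, Bec, ?_, Cec - CeΔ, ?_,
        Dec, ?_, fun i => aec i - t i * aeΔ i, ?_, fun i => bec i + beΔ i, ?_, ?_, ?_, hx0⟩
    · intro i j
      simp only [Matrix.of_apply, add_sub_cancel_left, abs_mul]
      calc |t i| * |AeΔ i j| ≤ 1 * |AeΔ i j| :=
            mul_le_mul_of_nonneg_right (ht1 i) (abs_nonneg _)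
        _ = AeΔ i j := by rw [one_mul, abs_of_nonneg (hAeΔ i j)]
    · intro i j; simp [hBeΔ]
    · intro i j
      simp only [Matrix.sub_apply, sub_sub_cancel_left, abs_neg]
      rw [abs_of_nonneg (hCeΔ i j)]
    · intro i j; simp [hDeΔ]
    · intro i
      simp only [sub_sub_cancel_left, abs_neg, abs_mul]
      calc |t i| * |aeΔ i| ≤ 1 * |aeΔ i| := mul_le_mul_of_nonneg_right (ht1 i) (abs_nonneg _)
        _ = aeΔ i := by rw [one_mul, abs_of_nonneg (haeΔ i)]
    · intro i; simp [abs_of_nonneg (hbeΔ i)]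
    · funext i
      simp only [Matrix.add_mulVec, Pi.add_apply, mulVec_rowScale]
      have := htden i
      simp only [hnum, hden, mul_add] at this
      linarith
    · intro i
      have hC := abs_le.mp (absRowBound Cf Cfc CfΔ x x hCf hxabs i)
      have hD := abs_le.mp (absRowBound Df Dfc DfΔ y zz hDf hyz i)
      have hbi := abs_le.mp (hbf i)
      have h3i := h3 i
      simp only [Matrix.add_mulVec, Matrix.sub_mulVec, Pi.add_apply, Pi.sub_apply] at h3i ⊢
      linarith
end

section
/- The interval system 𝐀x + 𝐁y ≤ 𝐛, x ≥ 0 is strongly solvable (i.e., for every A ∈ 𝐀, B ∈ 𝐁, b ∈ 𝐛 the real system Ax + By ≤ b, x ≥ 0 has a solution) if and only if the real system (A_c + A_Δ)x + (B_c + B_Δ)y¹ − (B_c − B_Δ)y² ≤ b_c − b_Δ, with x, y¹, y² ≥ 0, is solvable. -/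
/-!
A solution `(x, y¹, y²)` of the worst-case system solves every `Ax + By ≤ b` with `y = y¹ − y²`,
since `Ax ≤ (A_c + A_Δ)x`, `By¹ ≤ (B_c + B_Δ)y¹`, `(B_c − B_Δ)y² ≤ By²` and `b_c − b_Δ ≤ b`.

Conversely, if the worst-case system is infeasible, Farkas' lemma yields `u ≥ 0` with
`uᵀ(A_c + A_Δ) ≥ 0`, `|uᵀB_c| ≤ uᵀB_Δ` and `uᵀ(b_c − b_Δ) < 0`. The middle condition allows a
column-wise choice of `B ∈ 𝐁` with `uᵀB = 0`, and then `u` certifies that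
`(A_c + A_Δ)x + By ≤ b_c − b_Δ`, `x ≥ 0` has no solution.
-/

open Matrix

section Farkas

variable (𝕜 : Type*) {V : Type*} [Field 𝕜] [LinearOrder 𝕜] [IsStrictOrderedRing 𝕜]
  [AddCommGroup V] [Module 𝕜 V]

theorem farkas_alternative_fin : ∀ {k : ℕ} (a : Fin k → V) (b : V),
    (∃ μ : Fin k → 𝕜, 0 ≤ μ ∧ ∑ i, μ i • a i = b) ∨
      ∃ f : Module.Dual 𝕜 V, (∀ i, 0 ≤ f (a i)) ∧ f b < 0
  | 0, a, b => by
    by_cases hb : b = 0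
    · exact .inl ⟨0, le_rfl, by simp [hb]⟩
    obtain ⟨f, hf⟩ := Module.Projective.exists_dual_ne_zero 𝕜 hb
    rcases hf.lt_or_gt with hf | hf
    · exact .inr ⟨f, finZeroElim, hf⟩
    · exact .inr ⟨-f, finZeroElim, by simpa using hf⟩
  | k + 1, a, b => by
    rcases farkas_alternative_fin (Fin.tail a) b with ⟨μ, hμ, rfl⟩ | ⟨f, hf, hfb⟩
    · refine .inl ⟨Fin.cons 0 μ, Fin.cases le_rfl hμ, ?_⟩
      simp [Fin.sum_univ_succ, Fin.tail]
    obtain ha₀ | ha₀ := le_or_gt 0 (f (a 0))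
    · exact .inr ⟨f, Fin.cases ha₀ hf, hfb⟩
    -- project along `a 0` onto `ker f` and recurse on the projected family
    set π : V →ₗ[𝕜] V := LinearMap.id - (f (a 0))⁻¹ • f.smulRight (a 0) with hπ
    have hπ_apply (v : V) : π v = v - (f v / f (a 0)) • a 0 := by
      simp [hπ, div_eq_inv_mul, mul_smul]
    rcases farkas_alternative_fin (π ∘ Fin.tail a) (π b) with ⟨μ, hμ, hμb⟩ | ⟨g, hg, hgb⟩
    · set s := ∑ i, μ i • a i.succ
      have hs : π s = π b := by simpa [s, map_sum, Fin.tail] using hμb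
      have hfs : 0 ≤ f s := by
        simpa [s, Fin.tail] using Finset.sum_nonneg fun i _ => mul_nonneg (hμ i) (hf i)
      refine .inl ⟨Fin.cons ((f b - f s) / f (a 0)) μ,
        Fin.cases (div_nonneg_of_nonpos (by linarith) ha₀.le) hμ, ?_⟩
      rw [hπ_apply, hπ_apply] at hs
      rw [Fin.sum_univ_succ]
      simp only [Fin.cons_zero, Fin.cons_succ]
      linear_combination (norm := module) hs
    · refine .inr ⟨g ∘ₗ π, Fin.cases ?_ hg, hgb⟩
      simp [hπ_apply, ha₀.ne]

theorem farkas_alternative {ι : Type*} [Fintype ι] (a : ι → V) (b : V) :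
    (∃ μ : ι → 𝕜, 0 ≤ μ ∧ ∑ i, μ i • a i = b) ∨
      ∃ f : Module.Dual 𝕜 V, (∀ i, 0 ≤ f (a i)) ∧ f b < 0 := by
  let e := Fintype.equivFin ι
  rcases farkas_alternative_fin 𝕜 (a ∘ e.symm) b with ⟨μ, hμ, hμb⟩ | ⟨f, hf, hfb⟩
  · refine .inl ⟨μ ∘ e, fun i => hμ (e i), ?_⟩
    rw [← hμb, ← e.sum_comp]
    simp
  · exact .inr ⟨f, fun i => by simpa using hf (e i), hfb⟩

end Farkas

section IntervalMatrix

variable {𝕜 m n : Type*} [Field 𝕜] [LinearOrder 𝕜] [IsStrictOrderedRing 𝕜]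

theorem Matrix.farkas_alternative_mulVec_le [Fintype m] [DecidableEq m] [Fintype n]
    (M : Matrix m n 𝕜) (b : m → 𝕜) :
    (∃ z, 0 ≤ z ∧ M *ᵥ z ≤ b) ∨ ∃ u, 0 ≤ u ∧ 0 ≤ u ᵥ* M ∧ u ⬝ᵥ b < 0 := by
  -- the columns of `M` together with the slack directions
  rcases farkas_alternative 𝕜 (Sum.elim (fun j t => M t j) fun t => Pi.single t 1) b with
    ⟨μ, hμ, hμb⟩ | ⟨f, hf, hfb⟩
  · refine .inl ⟨μ ∘ Sum.inl, fun j => hμ _, ?_⟩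
    have : M *ᵥ (μ ∘ Sum.inl) + μ ∘ Sum.inr = b := by
      rw [← hμb, Fintype.sum_sum_type, mulVec_eq_sum]
      ext t
      simp [Finset.sum_apply, Pi.single_apply]
    exact this ▸ le_add_of_nonneg_right fun t => hμ _
  · obtain ⟨u, rfl⟩ := (dotProductEquiv 𝕜 m).surjective f
    refine .inr ⟨u, fun t => ?_, fun j => hf (Sum.inl j), hfb⟩
    simpa using hf (Sum.inr t)

theorem Matrix.mulVec_le_mulVec_of_le {R : Type*} [Semiring R] [PartialOrder R]
    [IsOrderedRing R] [Fintype n] {A A' : Matrix m n R} (h : ∀ i j, A i j ≤ A' i j)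
    {x : n → R} (hx : 0 ≤ x) : A *ᵥ x ≤ A' *ᵥ x :=
  fun i => dotProduct_le_dotProduct_of_nonneg_right (h i) hx

theorem exists_abs_le_one_add_mul_eq_zero {q p : 𝕜} (h : |q| ≤ p) :
    ∃ τ, |τ| ≤ 1 ∧ q + τ * p = 0 := by
  rcases (abs_nonneg q |>.trans h).eq_or_lt with hp | hp
  · exact ⟨0, by simp, by simpa [← hp] using h⟩
  · refine ⟨-q / p, ?_, by field_simp; ring⟩
    rwa [abs_div, abs_neg, abs_of_pos hp, div_le_one hp]

theorem exists_abs_sub_le_vecMul_eq_zero [Fintype m] {Bc BΔ : Matrix m n 𝕜}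
    (hBΔ : ∀ i j, 0 ≤ BΔ i j) {u : m → 𝕜} (hu : ∀ j, |(u ᵥ* Bc) j| ≤ (u ᵥ* BΔ) j) :
    ∃ B : Matrix m n 𝕜, (∀ i j, |B i j - Bc i j| ≤ BΔ i j) ∧ u ᵥ* B = 0 := by
  choose τ hτ₁ hτ₀ using fun j => exists_abs_le_one_add_mul_eq_zero (hu j)
  refine ⟨Bc + of fun i j => τ j * BΔ i j, fun i j => ?_, ?_⟩
  · simpa [abs_mul, abs_of_nonneg (hBΔ i j)] using mul_le_of_le_one_left (hBΔ i j) (hτ₁ j)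
  · ext j
    simpa [vecMul, dotProduct, Finset.mul_sum, mul_add, Finset.sum_add_distrib, mul_left_comm]
      using hτ₀ j

variable [Fintype n] {A Ac AΔ : Matrix m n 𝕜} {x : n → 𝕜}

theorem Matrix.mulVec_le_add_mulVec_of_abs_sub_le (hA : ∀ i j, |A i j - Ac i j| ≤ AΔ i j)
    (hx : 0 ≤ x) : A *ᵥ x ≤ (Ac + AΔ) *ᵥ x :=
  mulVec_le_mulVec_of_le (fun i j => sub_le_iff_le_add'.mp (abs_sub_le_iff.mp (hA i j)).1) hx

theorem Matrix.sub_mulVec_le_mulVec_of_abs_sub_le (hA : ∀ i j, |A i j - Ac i j| ≤ AΔ i j)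
    (hx : 0 ≤ x) : (Ac - AΔ) *ᵥ x ≤ A *ᵥ x :=
  mulVec_le_mulVec_of_le (fun i j => sub_le_comm.mp (abs_sub_le_iff.mp (hA i j)).2) hx

theorem Matrix.not_mulVec_add_mulVec_le [Fintype m] {n' : Type*} [Fintype n']
    {B : Matrix m n' 𝕜} {b u : m → 𝕜} (hu : 0 ≤ u) (huA : 0 ≤ u ᵥ* A)
    (huB : u ᵥ* B = 0) (hub : u ⬝ᵥ b < 0) (hx : 0 ≤ x) (y : n' → 𝕜) :
    ¬ A *ᵥ x + B *ᵥ y ≤ b := by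
  intro h
  have := dotProduct_le_dotProduct_of_nonneg_left h hu
  rw [dotProduct_add, dotProduct_mulVec, dotProduct_mulVec, huB, zero_dotProduct, add_zero] at this
  linarith [dotProduct_nonneg_of_nonneg huA hx]

end IntervalMatrix

/-- Strong solvability of `𝐀x + 𝐁y ≤ 𝐛, x ≥ 0` is equivalent to solvability of
`(A_c + A_Δ)x + (B_c + B_Δ)y¹ − (B_c − B_Δ)y² ≤ b_c − b_Δ`, `x, y¹, y² ≥ 0`. -/
theorem strong_solvability_mixed_iff {m n n' : ℕ}
    (Ac AΔ : Matrix (Fin m) (Fin n) ℝ)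
    (Bc BΔ : Matrix (Fin m) (Fin n') ℝ)
    (bc bΔ : Fin m → ℝ)
    (hAΔ : ∀ i j, 0 ≤ AΔ i j) (hBΔ : ∀ i j, 0 ≤ BΔ i j) (hbΔ : ∀ i, 0 ≤ bΔ i) :
    (∀ A : Matrix (Fin m) (Fin n) ℝ, (∀ i j, |A i j - Ac i j| ≤ AΔ i j) →
     ∀ B : Matrix (Fin m) (Fin n') ℝ, (∀ i j, |B i j - Bc i j| ≤ BΔ i j) →
     ∀ b : Fin m → ℝ, (∀ i, |b i - bc i| ≤ bΔ i) →
      ∃ (x : Fin n → ℝ) (y : Fin n' → ℝ),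
        (∀ i, (A.mulVec x) i + (B.mulVec y) i ≤ b i) ∧ (∀ j, 0 ≤ x j))
    ↔
    (∃ (x : Fin n → ℝ) (y1 y2 : Fin n' → ℝ),
      (∀ i, ((Ac + AΔ).mulVec x) i + ((Bc + BΔ).mulVec y1) i
          - ((Bc - BΔ).mulVec y2) i ≤ bc i - bΔ i) ∧
      (∀ j, 0 ≤ x j) ∧ (∀ j, 0 ≤ y1 j) ∧ (∀ j, 0 ≤ y2 j)) := by
  constructor
  · intro h
    rcases farkas_alternative_mulVec_le (fromCols (Ac + AΔ) (fromCols (Bc + BΔ) (-(Bc - BΔ))))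
      (bc - bΔ) with ⟨z, hz, hMz⟩ | ⟨u, hu, huM, hub⟩
    · refine ⟨z ∘ Sum.inl, (z ∘ Sum.inr) ∘ Sum.inl, (z ∘ Sum.inr) ∘ Sum.inr, fun i => ?_,
        fun j => hz _, fun j => hz _, fun j => hz _⟩
      have hMz_i := hMz i
      simp only [fromCols_mulVec, neg_mulVec, Pi.add_apply, Pi.neg_apply, Pi.sub_apply] at hMz_i
      linarith
    · simp only [vecMul_fromCols, Sum.nonneg_elim_iff] at huM
      obtain ⟨huA, huB_upper, huB_lower⟩ := huM
      simp only [Pi.le_def, vecMul_add, vecMul_neg, vecMul_sub, Pi.add_apply, Pi.neg_apply,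
        Pi.sub_apply, Pi.zero_apply] at huB_upper huB_lower
      obtain ⟨B, hB, huB⟩ := exists_abs_sub_le_vecMul_eq_zero (Bc := Bc) (u := u) hBΔ
        fun j => abs_le.mpr ⟨by linarith [huB_upper j], by linarith [huB_lower j]⟩
      obtain ⟨x, y, hxy, hx⟩ := h (Ac + AΔ) (by simp [abs_of_nonneg (hAΔ _ _)]) B hB (bc - bΔ)
        (by simp [abs_of_nonneg (hbΔ _)])
      exact absurd hxy (not_mulVec_add_mulVec_le hu huA huB hub hx y)
  · rintro ⟨x, y1, y2, hsol, hx, hy1, hy2⟩ A hA B hB b hb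
    refine ⟨x, y1 - y2, fun i => ?_, hx⟩
    have hAx := mulVec_le_add_mulVec_of_abs_sub_le hA hx i
    have hBy1 := mulVec_le_add_mulVec_of_abs_sub_le hB hy1 i
    have hBy2 := sub_mulVec_le_mulVec_of_abs_sub_le hB hy2 i
    have hbi := sub_le_comm.mp (abs_sub_le_iff.mp (hb i)).2
    rw [mulVec_sub, Pi.sub_apply]
    linarith [hsol i]
end

section
/- For the interval system 𝐀x + 𝐁∀y ≤ 𝐛, x ≥ 0, where the ∀/∃ split of 𝐀 is 𝐀 = 𝐀∀ + 𝐀∃, 𝐁 = 𝐁∀ is entirely universally quantified, and 𝐛 = 𝐛∀ + 𝐛∃, the following are equivalent for (x, y): (i) (x, y) is an AE solution; (ii) x ≥ 0 and (A∃_low + A∀_up)x + B∀_c y + B∀_Δ|y| ≤ b∃_up + b∀_low; (iii) there exist y¹, y² ≥ 0 with y = y¹ − y², x ≥ 0 and (A∃_low + A∀_up)x + B∀_up y¹ − B∀_low y² ≤ b∃_up + b∀_low. -/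
/-- For `𝐀x + 𝐁∀y ≤ 𝐛, x ≥ 0` with `𝐀 = 𝐀∀ + 𝐀∃`, `𝐁` entirely universally
quantified, and `𝐛 = 𝐛∀ + 𝐛∃`, the conditions (i) AE solution, (ii) the
absolute-value inequality, (iii) the split-variable inequality, are equivalent. -/
theorem ae_solution_B_forall_tfae {m n n' : ℕ}
    (Afc AfΔ Aec AeΔ : Matrix (Fin m) (Fin n) ℝ)
    (Bfc BfΔ : Matrix (Fin m) (Fin n') ℝ)
    (bfc bfΔ bec beΔ : Fin m → ℝ)
    (hAfΔ : ∀ i j, 0 ≤ AfΔ i j) (hAeΔ : ∀ i j, 0 ≤ AeΔ i j)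
    (hBfΔ : ∀ i j, 0 ≤ BfΔ i j)
    (hbfΔ : ∀ i, 0 ≤ bfΔ i) (hbeΔ : ∀ i, 0 ≤ beΔ i)
    (x : Fin n → ℝ) (y : Fin n' → ℝ) :
    ((∀ Af : Matrix (Fin m) (Fin n) ℝ, (∀ i j, |Af i j - Afc i j| ≤ AfΔ i j) →
      ∀ Bf : Matrix (Fin m) (Fin n') ℝ, (∀ i j, |Bf i j - Bfc i j| ≤ BfΔ i j) →
      ∀ bf : Fin m → ℝ, (∀ i, |bf i - bfc i| ≤ bfΔ i) →
        ∃ Ae : Matrix (Fin m) (Fin n) ℝ, (∀ i j, |Ae i j - Aec i j| ≤ AeΔ i j) ∧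
        ∃ be : Fin m → ℝ, (∀ i, |be i - bec i| ≤ beΔ i) ∧
          (∀ i, ((Af + Ae).mulVec x) i + (Bf.mulVec y) i ≤ bf i + be i) ∧
          (∀ j, 0 ≤ x j))
      ↔
      ((∀ j, 0 ≤ x j) ∧
       ∀ i, (((Aec - AeΔ) + (Afc + AfΔ)).mulVec x) i + (Bfc.mulVec y) i
          + (BfΔ.mulVec (fun j => |y j|)) i ≤ (bec i + beΔ i) + (bfc i - bfΔ i)))
    ∧
    ((∀ Af : Matrix (Fin m) (Fin n) ℝ, (∀ i j, |Af i j - Afc i j| ≤ AfΔ i j) →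
      ∀ Bf : Matrix (Fin m) (Fin n') ℝ, (∀ i j, |Bf i j - Bfc i j| ≤ BfΔ i j) →
      ∀ bf : Fin m → ℝ, (∀ i, |bf i - bfc i| ≤ bfΔ i) →
        ∃ Ae : Matrix (Fin m) (Fin n) ℝ, (∀ i j, |Ae i j - Aec i j| ≤ AeΔ i j) ∧
        ∃ be : Fin m → ℝ, (∀ i, |be i - bec i| ≤ beΔ i) ∧
          (∀ i, ((Af + Ae).mulVec x) i + (Bf.mulVec y) i ≤ bf i + be i) ∧
          (∀ j, 0 ≤ x j))
      ↔
      (∃ y1 y2 : Fin n' → ℝ, y = y1 - y2 ∧ (∀ j, 0 ≤ y1 j) ∧ (∀ j, 0 ≤ y2 j) ∧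
        (∀ j, 0 ≤ x j) ∧
        ∀ i, (((Aec - AeΔ) + (Afc + AfΔ)).mulVec x) i
          + ((Bfc + BfΔ).mulVec y1) i - ((Bfc - BfΔ).mulVec y2) i
          ≤ (bec i + beΔ i) + (bfc i - bfΔ i))) := by
  classical
  have h12 :
      (∀ Af : Matrix (Fin m) (Fin n) ℝ, (∀ i j, |Af i j - Afc i j| ≤ AfΔ i j) →
      ∀ Bf : Matrix (Fin m) (Fin n') ℝ, (∀ i j, |Bf i j - Bfc i j| ≤ BfΔ i j) →
      ∀ bf : Fin m → ℝ, (∀ i, |bf i - bfc i| ≤ bfΔ i) →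
        ∃ Ae : Matrix (Fin m) (Fin n) ℝ, (∀ i j, |Ae i j - Aec i j| ≤ AeΔ i j) ∧
        ∃ be : Fin m → ℝ, (∀ i, |be i - bec i| ≤ beΔ i) ∧
          (∀ i, ((Af + Ae).mulVec x) i + (Bf.mulVec y) i ≤ bf i + be i) ∧
          (∀ j, 0 ≤ x j))
      ↔
      ((∀ j, 0 ≤ x j) ∧
       ∀ i, (((Aec - AeΔ) + (Afc + AfΔ)).mulVec x) i + (Bfc.mulVec y) i
          + (BfΔ.mulVec (fun j => |y j|)) i ≤ (bec i + beΔ i) + (bfc i - bfΔ i)) := by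
    constructor
    · intro h
      set s : Fin n' → ℝ := fun j => if y j < 0 then -1 else 1 with hs
      have hsy : ∀ j, s j * y j = |y j| := by
        intro j
        by_cases hy : y j < 0
        · simp [s, hy, abs_of_neg hy]
        · simp [s, hy, abs_of_nonneg (le_of_not_gt hy)]
      have hsabs : ∀ j, |s j| = 1 := by
        intro j; by_cases hy : y j < 0 <;> simp [s, hy]
      obtain ⟨Ae, hAe, be, hbe, hineq, hx⟩ :=
        h (Afc + AfΔ) (by intro i j; simp [abs_of_nonneg (hAfΔ i j)])
          (fun i j => Bfc i j + BfΔ i j * s j)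
          (by intro i j
              have : |BfΔ i j * s j| = BfΔ i j := by
                rw [abs_mul, hsabs, mul_one, abs_of_nonneg (hBfΔ i j)]
              simpa using this.le)
          (fun i => bfc i - bfΔ i)
          (by intro i; simp [abs_of_nonneg (hbfΔ i)])
      refine ⟨hx, fun i => ?_⟩
      have key := hineq i
      simp only [Matrix.mulVec, dotProduct, Matrix.add_apply, Matrix.sub_apply] at key ⊢
      have hB : (∑ j, (Bfc i j + BfΔ i j * s j) * y j)
          = (∑ j, Bfc i j * y j) + ∑ j, BfΔ i j * |y j| := by
        rw [← Finset.sum_add_distrib]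
        congr 1; ext j
        rw [add_mul, mul_assoc, hsy]
      rw [hB] at key
      have hAterm : (∑ j, (Aec i j - AeΔ i j + (Afc i j + AfΔ i j)) * x j)
          ≤ ∑ j, (Afc i j + AfΔ i j + Ae i j) * x j := by
        apply Finset.sum_le_sum
        intro j _
        have h1 : Aec i j - AeΔ i j ≤ Ae i j := by
          have := (abs_le.mp (hAe i j)).1; linarith
        nlinarith [hx j]
      have hbterm : be i ≤ bec i + beΔ i := by
        have := (abs_le.mp (hbe i)).2; linarith
      linarith
    · rintro ⟨hx, hineq⟩ Af hAf Bf hBf bf hbf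
      refine ⟨Aec - AeΔ, ?_, fun i => bec i + beΔ i, ?_, fun i => ?_, hx⟩
      · intro i j; simp [abs_of_nonneg (hAeΔ i j)]
      · intro i; simp [abs_of_nonneg (hbeΔ i)]
      have key := hineq i
      simp only [Matrix.mulVec, dotProduct, Matrix.add_apply, Matrix.sub_apply] at key ⊢
      have hA : (∑ j, (Af i j + (Aec i j - AeΔ i j)) * x j)
          ≤ ∑ j, (Aec i j - AeΔ i j + (Afc i j + AfΔ i j)) * x j := by
        apply Finset.sum_le_sum
        intro j _
        have h1 : Af i j ≤ Afc i j + AfΔ i j := by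
          have := (abs_le.mp (hAf i j)).2; linarith
        nlinarith [hx j]
      have hB : (∑ j, Bf i j * y j)
          ≤ (∑ j, Bfc i j * y j) + ∑ j, BfΔ i j * |y j| := by
        rw [← Finset.sum_add_distrib]
        apply Finset.sum_le_sum
        intro j _
        have h1 : (Bf i j - Bfc i j) * y j ≤ |Bf i j - Bfc i j| * |y j| := by
          calc (Bf i j - Bfc i j) * y j ≤ |(Bf i j - Bfc i j) * y j| := le_abs_self _
            _ = |Bf i j - Bfc i j| * |y j| := abs_mul _ _
        have h2 : |Bf i j - Bfc i j| * |y j| ≤ BfΔ i j * |y j| := by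
          apply mul_le_mul_of_nonneg_right (hBf i j) (abs_nonneg _)
        nlinarith
      have hbf' : bfc i - bfΔ i ≤ bf i := by
        have := (abs_le.mp (hbf i)).1; linarith
      have := hineq i
      simp only [Matrix.mulVec, dotProduct, Matrix.add_apply, Matrix.sub_apply] at this
      linarith
  have h23 :
      ((∀ j, 0 ≤ x j) ∧
       ∀ i, (((Aec - AeΔ) + (Afc + AfΔ)).mulVec x) i + (Bfc.mulVec y) i
          + (BfΔ.mulVec (fun j => |y j|)) i ≤ (bec i + beΔ i) + (bfc i - bfΔ i))
      ↔
      (∃ y1 y2 : Fin n' → ℝ, y = y1 - y2 ∧ (∀ j, 0 ≤ y1 j) ∧ (∀ j, 0 ≤ y2 j) ∧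
        (∀ j, 0 ≤ x j) ∧
        ∀ i, (((Aec - AeΔ) + (Afc + AfΔ)).mulVec x) i
          + ((Bfc + BfΔ).mulVec y1) i - ((Bfc - BfΔ).mulVec y2) i
          ≤ (bec i + beΔ i) + (bfc i - bfΔ i)) := by
    constructor
    · rintro ⟨hx, hineq⟩
      refine ⟨fun j => (|y j| + y j) / 2, fun j => (|y j| - y j) / 2, ?_, ?_, ?_, hx, ?_⟩
      · funext j; simp; ring
      · intro j; have := neg_abs_le (y j); linarith
      · intro j; have := le_abs_self (y j); linarith
      · intro i
        have key := hineq i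
        simp only [Matrix.mulVec, dotProduct, Matrix.add_apply, Matrix.sub_apply]
          at key ⊢
        have hB : (∑ j, (Bfc i j + BfΔ i j) * ((|y j| + y j) / 2))
            - (∑ j, (Bfc i j - BfΔ i j) * ((|y j| - y j) / 2))
            = (∑ j, Bfc i j * y j) + ∑ j, BfΔ i j * |y j| := by
          rw [← Finset.sum_sub_distrib, ← Finset.sum_add_distrib]
          congr 1; ext j; ring
        linarith
    · rintro ⟨y1, y2, hy, hy1, hy2, hx, hineq⟩
      refine ⟨hx, fun i => ?_⟩
      have key := hineq i
      simp only [Matrix.mulVec, dotProduct, Matrix.add_apply, Matrix.sub_apply]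
        at key ⊢
      have hB : (∑ j, Bfc i j * y j) + (∑ j, BfΔ i j * |y j|)
          ≤ (∑ j, (Bfc i j + BfΔ i j) * y1 j) - ∑ j, (Bfc i j - BfΔ i j) * y2 j := by
        rw [← Finset.sum_sub_distrib, ← Finset.sum_add_distrib]
        apply Finset.sum_le_sum
        intro j _
        have hyj : y j = y1 j - y2 j := by rw [hy]; simp
        have habs : |y j| ≤ y1 j + y2 j := by
          rw [hyj]
          refine (abs_sub _ _).trans ?_
          rw [abs_of_nonneg (hy1 j), abs_of_nonneg (hy2 j)]
        have hprod : 0 ≤ BfΔ i j * (y1 j + y2 j - |y j|) :=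
          mul_nonneg (hBfΔ i j) (by linarith)
        have expand : (Bfc i j + BfΔ i j) * y1 j - (Bfc i j - BfΔ i j) * y2 j
            = Bfc i j * y j + BfΔ i j * (y1 j + y2 j) := by rw [hyj]; ring
        linarith [hprod, expand]
      linarith
  exact ⟨h12, h12.trans h23⟩
end

section
/- There exists an interval system of inequalities that is AE solvable but has no AE solution: with interval parameters A∃, A∀ ∈ [−1, 1], the system A∃x ≤ −2, A∀x ≤ 1 satisfies (a) for every A∀ ∈ [−1,1] there exist A∃ ∈ [−1,1] and x ∈ ℝ with A∃x ≤ −2 and A∀x ≤ 1; but (b) there is no x ∈ ℝ such that for every A∀ ∈ [−1,1] there exists A∃ ∈ [−1,1] with A∃x ≤ −2 and A∀x ≤ 1. -/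
/-- The interval system `A∃ x ≤ −2, A∀ x ≤ 1` with `A∃, A∀ ∈ [−1,1]` is AE
solvable but has no AE solution. -/
theorem ae_solvable_but_no_ae_solution :
    (∀ Af : ℝ, Af ∈ Set.Icc (-1 : ℝ) 1 →
      ∃ Ae : ℝ, Ae ∈ Set.Icc (-1 : ℝ) 1 ∧
        ∃ x : ℝ, Ae * x ≤ -2 ∧ Af * x ≤ 1)
    ∧
    ¬ ∃ x : ℝ, ∀ Af : ℝ, Af ∈ Set.Icc (-1 : ℝ) 1 →
        ∃ Ae : ℝ, Ae ∈ Set.Icc (-1 : ℝ) 1 ∧ Ae * x ≤ -2 ∧ Af * x ≤ 1 := by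
  constructor
  · intro Af hAf
    rcases le_or_gt 0 Af with h | h
    · exact ⟨1, by norm_num, -2, by norm_num, by nlinarith⟩
    · exact ⟨-1, by norm_num, 2, by norm_num, by nlinarith⟩
  · rintro ⟨x, hx⟩
    obtain ⟨Ae1, hAe1, h1, h1'⟩ := hx 1 (by norm_num)
    obtain ⟨Ae2, hAe2, h2, h2'⟩ := hx (-1) (by norm_num)
    simp only [Set.mem_Icc] at hAe1 hAe2
    rw [one_mul] at h1'
    rw [neg_one_mul, neg_le] at h2'
    nlinarith [hAe1.1, hAe1.2, h1]
end

section
/- The interval system 𝐀x = 𝐛 is strongly solvable (for every A ∈ 𝐀, b ∈ 𝐛 there is x with Ax = b) if and only if for every sign vector s ∈ {±1}^m the real system (A_c + diag(s)A_Δ)x¹ − (A_c − diag(s)A_Δ)x² = b_c − diag(s)b_Δ, x¹, x² ≥ 0 is solvable. -/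
/-!
Both directions rest on Farkas' lemma, which follows by eliminating one generator at a time
(Fourier–Motzkin). If the sign system for `s` is unsolvable, its Farkas certificate `p` satisfies
`|p ᵥ* Ac| ≤ p ᵥ* (diag s * AΔ)`; scaling column `j` of `diag s * AΔ` by the ratio of the two
sides, which lies in `[-1, 1]`, gives `A ∈ 𝐀` with `p ᵥ* A = 0`, so `A x = bc - s * bΔ` has no
solution although `bc - s * bΔ ∈ 𝐛`. Conversely, if `A x = b` is unsolvable there is `p` with
`p ᵥ* A = 0` and `p ⬝ᵥ b < 0`. For `s` the sign vector of `p`, pairing the sign system with `p`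
gives a left side `≥ p ⬝ᵥ A (x¹ - x²) = 0` and a right side `≤ p ⬝ᵥ b < 0`.
-/

open Matrix Finset

lemma exists_nonneg_sum_insert {R M ι : Type*} [Semiring R] [PartialOrder R]
    [AddCommMonoid M] [Module R M] [DecidableEq ι] {S : Finset ι} {a : ι} (ha : a ∉ S)
    (v : ι → M) {c : ι → R} (hc : ∀ i ∈ S, 0 ≤ c i) {μ : R} (hμ : 0 ≤ μ) :
    ∃ c' : ι → R, (∀ i ∈ insert a S, 0 ≤ c' i) ∧
      ∑ i ∈ insert a S, c' i • v i = μ • v a + ∑ i ∈ S, c i • v i := by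
  have hupd : ∀ i ∈ S, Function.update c a μ i = c i := fun i hi =>
    Function.update_of_ne (ne_of_mem_of_not_mem hi ha) _ _
  refine ⟨Function.update c a μ, (forall_mem_insert _ _ _).2 ⟨by simpa using hμ, ?_⟩, ?_⟩
  · exact fun i hi => (hupd i hi).symm ▸ hc i hi
  · rw [sum_insert ha, Function.update_self]
    exact congrArg _ (sum_congr rfl fun i hi => by rw [hupd i hi])

section Farkas

variable {𝕜 σ κ : Type*} [Field 𝕜] [Fintype σ]

def projAlong (p u x : σ → 𝕜) : σ → 𝕜 := x - (p ⬝ᵥ x / p ⬝ᵥ u) • u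

lemma dotProduct_projAlong (q p u x : σ → 𝕜) :
    q ⬝ᵥ projAlong p u x = (q - (q ⬝ᵥ u / p ⬝ᵥ u) • p) ⬝ᵥ x := by
  simp only [projAlong, dotProduct_sub, sub_dotProduct, dotProduct_smul, smul_dotProduct,
    smul_eq_mul]
  ring

lemma sum_smul_projAlong (S : Finset κ) (c : κ → 𝕜) (p u : σ → 𝕜) (v : κ → σ → 𝕜) :
    ∑ i ∈ S, c i • projAlong p u (v i)
      = ∑ i ∈ S, c i • v i - (∑ i ∈ S, c i * (p ⬝ᵥ v i / p ⬝ᵥ u)) • u := by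
  simp only [projAlong, smul_sub, smul_smul, sum_sub_distrib, sum_smul]

variable [LinearOrder 𝕜] [IsStrictOrderedRing 𝕜]

lemma exists_nonneg_sum_insert_of_projAlong [DecidableEq κ] {S : Finset κ} {a : κ} (ha : a ∉ S)
    {v : κ → σ → 𝕜} {d p : σ → 𝕜} (hp : ∀ i ∈ S, 0 ≤ p ⬝ᵥ v i) (hpd : p ⬝ᵥ d < 0)
    (hpa : p ⬝ᵥ v a < 0) {c : κ → 𝕜} (hc : ∀ i ∈ S, 0 ≤ c i)
    (hcd : ∑ i ∈ S, c i • projAlong p (v a) (v i) = projAlong p (v a) d) :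
    ∃ c' : κ → 𝕜, (∀ i ∈ insert a S, 0 ≤ c' i) ∧ ∑ i ∈ insert a S, c' i • v i = d := by
  have hμ : 0 ≤ p ⬝ᵥ d / p ⬝ᵥ v a - ∑ i ∈ S, c i * (p ⬝ᵥ v i / p ⬝ᵥ v a) := by
    have hd : 0 < p ⬝ᵥ d / p ⬝ᵥ v a := div_pos_of_neg_of_neg hpd hpa
    have hS : ∑ i ∈ S, c i * (p ⬝ᵥ v i / p ⬝ᵥ v a) ≤ 0 := sum_nonpos fun i hi =>
      mul_nonpos_of_nonneg_of_nonpos (hc i hi) (div_nonpos_of_nonneg_of_nonpos (hp i hi) hpa.le)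
    linarith
  obtain ⟨c', hc', hsum⟩ := exists_nonneg_sum_insert ha v hc hμ
  refine ⟨c', hc', ?_⟩
  rw [sum_smul_projAlong, projAlong] at hcd
  rw [hsum]
  linear_combination (norm := module) hcd

theorem farkas_alternative_finset [DecidableEq κ] (S : Finset κ) :
    ∀ (v : κ → σ → 𝕜) (d : σ → 𝕜),
      (∃ c : κ → 𝕜, (∀ i ∈ S, 0 ≤ c i) ∧ ∑ i ∈ S, c i • v i = d) ∨
        ∃ p : σ → 𝕜, (∀ i ∈ S, 0 ≤ p ⬝ᵥ v i) ∧ p ⬝ᵥ d < 0 := by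
  induction S using Finset.induction_on with
  | empty =>
    intro v d
    by_cases hd : d = 0
    · exact Or.inl ⟨0, by simp, by simp [hd]⟩
    · refine Or.inr ⟨-d, by simp, ?_⟩
      have : 0 < d ⬝ᵥ d := lt_of_le_of_ne (sum_nonneg fun i _ => mul_self_nonneg (d i))
        (Ne.symm (mt dotProduct_self_eq_zero.1 hd))
      simpa using this
  | insert a S ha ih =>
    intro v d
    rcases ih v d with ⟨c, hc, hcd⟩ | ⟨p, hp, hpd⟩
    · obtain ⟨c', hc', hsum⟩ := exists_nonneg_sum_insert ha v hc le_rfl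
      exact Or.inl ⟨c', hc', by rw [hsum, zero_smul, zero_add, hcd]⟩
    obtain hpa | hpa := le_or_gt 0 (p ⬝ᵥ v a)
    · exact Or.inr ⟨p, (forall_mem_insert _ _ _).2 ⟨hpa, hp⟩, hpd⟩
    -- Eliminate `v a` by projecting everything onto the hyperplane `p ⬝ᵥ x = 0` along `v a`.
    rcases ih (fun i => projAlong p (v a) (v i)) (projAlong p (v a) d) with
      ⟨c, hc, hcd⟩ | ⟨q, hq, hqd⟩
    · exact Or.inl (exists_nonneg_sum_insert_of_projAlong ha hp hpd hpa hc hcd)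
    · refine Or.inr ⟨q - (q ⬝ᵥ v a / p ⬝ᵥ v a) • p,
        (forall_mem_insert _ _ _).2 ⟨?_, fun i hi => ?_⟩, ?_⟩
      · rw [← dotProduct_projAlong, projAlong, div_self hpa.ne, one_smul, sub_self,
          dotProduct_zero]
      · simpa only [dotProduct_projAlong] using hq i hi
      · simpa only [dotProduct_projAlong] using hqd

variable [Fintype κ]

theorem Matrix.farkas_alternative (M : Matrix σ κ 𝕜) (d : σ → 𝕜) :
    (∃ x, 0 ≤ x ∧ M *ᵥ x = d) ∨ ∃ p, 0 ≤ p ᵥ* M ∧ p ⬝ᵥ d < 0 := by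
  classical
  rcases farkas_alternative_finset univ (fun j => Mᵀ j) d with ⟨c, hc, hcd⟩ | ⟨p, hp, hpd⟩
  · refine Or.inl ⟨c, fun j => hc j (mem_univ j), ?_⟩
    rw [← hcd]
    ext i
    simp [mulVec, dotProduct, Finset.sum_apply, mul_comm]
  · exact Or.inr ⟨p, fun j => hp j (mem_univ j), hpd⟩

theorem Matrix.farkas_alternative_sub (B C : Matrix σ κ 𝕜) (d : σ → 𝕜) :
    (∃ x y, 0 ≤ x ∧ 0 ≤ y ∧ B *ᵥ x - C *ᵥ y = d) ∨
      ∃ p, 0 ≤ p ᵥ* B ∧ p ᵥ* C ≤ 0 ∧ p ⬝ᵥ d < 0 := by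
  rcases (fromCols B (-C)).farkas_alternative d with ⟨x, hx, hxd⟩ | ⟨p, hp, hpd⟩
  · refine Or.inl ⟨x ∘ Sum.inl, x ∘ Sum.inr, fun j => hx _, fun j => hx _, ?_⟩
    rwa [fromCols_mulVec, neg_mulVec, ← sub_eq_add_neg] at hxd
  · refine Or.inr ⟨p, fun j => ?_, fun j => ?_, hpd⟩
    · simpa [vecMul_fromCols] using hp (Sum.inl j)
    · simpa [vecMul_fromCols, vecMul_neg] using hp (Sum.inr j)

end Farkas

section IntervalSystem

variable {𝕜 m n : Type*} [Fintype m] [Fintype n]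

lemma dotProduct_diagonal_mul_mulVec [CommSemiring 𝕜] [DecidableEq m] (p s : m → 𝕜)
    (G : Matrix m n 𝕜) (x : n → 𝕜) : p ⬝ᵥ (diagonal s * G) *ᵥ x = (s * p) ⬝ᵥ G *ᵥ x := by
  simp only [dotProduct, ← mulVec_mulVec, mulVec_diagonal, Pi.mul_apply]
  exact sum_congr rfl fun i _ => by ring

variable [Field 𝕜] [LinearOrder 𝕜] [IsStrictOrderedRing 𝕜]

lemma abs_dotProduct_mulVec_le (p : m → 𝕜) {E R : Matrix m n 𝕜} (hE : ∀ i j, |E i j| ≤ R i j)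
    {x : n → 𝕜} (hx : 0 ≤ x) : |p ⬝ᵥ E *ᵥ x| ≤ |p| ⬝ᵥ R *ᵥ x := by
  simp only [dotProduct, mulVec, Finset.mul_sum, Pi.abs_apply]
  refine (abs_sum_le_sum_abs _ _).trans (sum_le_sum fun i _ =>
    (abs_sum_le_sum_abs _ _).trans (sum_le_sum fun j _ => ?_))
  rw [abs_mul, abs_mul, abs_of_nonneg (hx j)]
  exact mul_le_mul_of_nonneg_left (mul_le_mul_of_nonneg_right (hE i j) (hx j)) (abs_nonneg _)

lemma dotProduct_mulVec_mem_Icc [DecidableEq m] {A Ac AΔ : Matrix m n 𝕜}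
    (hA : ∀ i j, |A i j - Ac i j| ≤ AΔ i j) {s p : m → 𝕜} (hsp : s * p = |p|)
    {x : n → 𝕜} (hx : 0 ≤ x) :
    p ⬝ᵥ A *ᵥ x ∈
      Set.Icc (p ⬝ᵥ (Ac - diagonal s * AΔ) *ᵥ x) (p ⬝ᵥ (Ac + diagonal s * AΔ) *ᵥ x) := by
  have hdev := abs_le.1 (abs_dotProduct_mulVec_le p (E := A - Ac) hA hx)
  rw [sub_mulVec, dotProduct_sub] at hdev
  rw [sub_mulVec, add_mulVec, dotProduct_sub, dotProduct_add, dotProduct_diagonal_mul_mulVec, hsp]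
  constructor <;> linarith [hdev.1, hdev.2]

lemma dotProduct_sub_mul_le {b bc bΔ : m → 𝕜} (hb : ∀ i, |b i - bc i| ≤ bΔ i) {s p : m → 𝕜}
    (hsp : s * p = |p|) : p ⬝ᵥ (bc - s * bΔ) ≤ p ⬝ᵥ b := by
  refine sum_le_sum fun i _ => ?_
  have hi : s i * p i = |p i| := by simpa using congrFun hsp i
  have hdev : |p i * (b i - bc i)| ≤ |p i| * bΔ i := by
    rw [abs_mul]
    exact mul_le_mul_of_nonneg_left (hb i) (abs_nonneg _)
  have hsbΔ : p i * (s i * bΔ i) = |p i| * bΔ i := by rw [← hi]; ring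
  simp only [Pi.sub_apply, Pi.mul_apply]
  linarith [neg_abs_le (p i * (b i - bc i))]

lemma exists_vecMul_eq_zero_of_abs_vecMul_le {Ac G : Matrix m n 𝕜} {p : m → 𝕜}
    (h : ∀ j, |(p ᵥ* Ac) j| ≤ (p ᵥ* G) j) :
    ∃ A : Matrix m n 𝕜, (∀ i j, |A i j - Ac i j| ≤ |G i j|) ∧ p ᵥ* A = 0 := by
  classical
  refine ⟨Ac - G * diagonal ((p ᵥ* Ac) / (p ᵥ* G)), fun i j => ?_, ?_⟩
  · have ht : |((p ᵥ* Ac) / (p ᵥ* G)) j| ≤ 1 := by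
      rw [Pi.div_apply, abs_div]
      exact div_le_one_of_le₀ ((h j).trans (le_abs_self _)) (abs_nonneg _)
    simp only [Matrix.sub_apply, mul_diagonal, sub_sub_cancel_left, abs_neg, abs_mul]
    exact mul_le_of_le_one_right (abs_nonneg _) ht
  · ext j
    simp only [vecMul_sub, ← vecMul_vecMul, Pi.sub_apply, vecMul_diagonal, Pi.div_apply,
      Pi.zero_apply]
    rcases eq_or_ne ((p ᵥ* G) j) 0 with hc | hc
    · simp [hc, abs_nonpos_iff.1 (hc ▸ h j)]
    · rw [mul_div_cancel₀ _ hc, sub_self]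

end IntervalSystem

section StrongSolvability

variable {𝕜 m n : Type*} [Field 𝕜] [LinearOrder 𝕜] [IsStrictOrderedRing 𝕜]
  [Fintype m] [Fintype n] [DecidableEq m]

def IsStronglySolvable (Ac AΔ : Matrix m n 𝕜) (bc bΔ : m → 𝕜) : Prop :=
  ∀ A : Matrix m n 𝕜, (∀ i j, |A i j - Ac i j| ≤ AΔ i j) →
    ∀ b : m → 𝕜, (∀ i, |b i - bc i| ≤ bΔ i) → ∃ x, A *ᵥ x = b

def SignSystemSolvable (Ac AΔ : Matrix m n 𝕜) (bc bΔ s : m → 𝕜) : Prop :=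
  ∃ x₁ x₂, 0 ≤ x₁ ∧ 0 ≤ x₂ ∧
    (Ac + diagonal s * AΔ) *ᵥ x₁ - (Ac - diagonal s * AΔ) *ᵥ x₂ = bc - s * bΔ

lemma IsStronglySolvable.signSystemSolvable {Ac AΔ : Matrix m n 𝕜} {bc bΔ : m → 𝕜}
    (hAΔ : ∀ i j, 0 ≤ AΔ i j) (hbΔ : ∀ i, 0 ≤ bΔ i) (h : IsStronglySolvable Ac AΔ bc bΔ)
    {s : m → 𝕜} (hs : ∀ i, s i = 1 ∨ s i = -1) : SignSystemSolvable Ac AΔ bc bΔ s := by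
  rcases farkas_alternative_sub (Ac + diagonal s * AΔ) (Ac - diagonal s * AΔ) (bc - s * bΔ) with
    hsol | ⟨p, hp₁, hp₂, hpd⟩
  · exact hsol
  have habs : ∀ j, |(p ᵥ* Ac) j| ≤ (p ᵥ* (diagonal s * AΔ)) j := fun j => by
    have h₁ := hp₁ j
    have h₂ := hp₂ j
    simp only [vecMul_add, vecMul_sub, Pi.add_apply, Pi.sub_apply, Pi.zero_apply] at h₁ h₂
    exact abs_le.2 ⟨by linarith, by linarith⟩
  obtain ⟨A, hA, hpA⟩ := exists_vecMul_eq_zero_of_abs_vecMul_le habs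
  have hG : ∀ i j, |(diagonal s * AΔ) i j| = AΔ i j := fun i j => by
    rcases hs i with hi | hi <;> simp [diagonal_mul, hi, abs_of_nonneg (hAΔ i j)]
  have hb : ∀ i, |(bc - s * bΔ) i - bc i| ≤ bΔ i := fun i => by
    rcases hs i with hi | hi <;> simp [hi, abs_of_nonneg (hbΔ i)]
  obtain ⟨x, hx⟩ := h A (fun i j => (hA i j).trans_eq (hG i j)) _ hb
  have hpd_zero : p ⬝ᵥ (bc - s * bΔ) = 0 := by
    rw [← hx, dotProduct_mulVec, hpA, zero_dotProduct]
  exact (hpd.ne hpd_zero).elim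

lemma isStronglySolvable_of_signSystemSolvable {Ac AΔ : Matrix m n 𝕜} {bc bΔ : m → 𝕜}
    (h : ∀ s : m → 𝕜, (∀ i, s i = 1 ∨ s i = -1) → SignSystemSolvable Ac AΔ bc bΔ s) :
    IsStronglySolvable Ac AΔ bc bΔ := by
  intro A hA b hb
  rcases farkas_alternative_sub A A b with ⟨x₁, x₂, -, -, hx⟩ | ⟨p, hp₁, hp₂, hpb⟩
  · exact ⟨x₁ - x₂, by rw [mulVec_sub, hx]⟩
  have hpA : ∀ x, p ⬝ᵥ A *ᵥ x = 0 := fun x => by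
    rw [dotProduct_mulVec, le_antisymm hp₂ hp₁, zero_dotProduct]
  set s : m → 𝕜 := fun i => if 0 ≤ p i then 1 else -1
  have hs : ∀ i, s i = 1 ∨ s i = -1 := fun i => by by_cases hi : 0 ≤ p i <;> simp [s, hi]
  have hsp : s * p = |p| := funext fun i => by
    by_cases hi : 0 ≤ p i
    · simp [s, hi, abs_of_nonneg hi]
    · simp [s, hi, abs_of_neg (not_le.1 hi)]
  obtain ⟨x₁, x₂, hx₁, hx₂, hx⟩ := h s hs
  have h₁ := (dotProduct_mulVec_mem_Icc hA hsp hx₁).2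
  have h₂ := (dotProduct_mulVec_mem_Icc hA hsp hx₂).1
  have hrhs := dotProduct_sub_mul_le hb hsp
  rw [← hx, dotProduct_sub] at hrhs
  linarith [hpA x₁, hpA x₂]

end StrongSolvability

/-- Rohn's characterization: `𝐀x = 𝐛` is strongly solvable iff for each sign
vector `s` the system `(A_c + diag(s)A_Δ)x¹ − (A_c − diag(s)A_Δ)x² = b_c − diag(s)b_Δ`,
`x¹, x² ≥ 0`, is solvable. -/
theorem strong_solvability_equations_iff {m n : ℕ}
    (Ac AΔ : Matrix (Fin m) (Fin n) ℝ) (bc bΔ : Fin m → ℝ)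
    (hAΔ : ∀ i j, 0 ≤ AΔ i j) (hbΔ : ∀ i, 0 ≤ bΔ i) :
    (∀ A : Matrix (Fin m) (Fin n) ℝ, (∀ i j, |A i j - Ac i j| ≤ AΔ i j) →
     ∀ b : Fin m → ℝ, (∀ i, |b i - bc i| ≤ bΔ i) →
      ∃ x : Fin n → ℝ, A.mulVec x = b)
    ↔
    (∀ s : Fin m → ℝ, (∀ i, s i = 1 ∨ s i = -1) →
      ∃ x1 x2 : Fin n → ℝ, (∀ j, 0 ≤ x1 j) ∧ (∀ j, 0 ≤ x2 j) ∧
        (Ac + Matrix.diagonal s * AΔ).mulVec x1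
          - (Ac - Matrix.diagonal s * AΔ).mulVec x2
          = fun i => bc i - s i * bΔ i) :=
  ⟨fun h _ hs => IsStronglySolvable.signSystemSolvable hAΔ hbΔ h hs,
    isStronglySolvable_of_signSystemSolvable⟩
end

section
/- For an interval matrix 𝐀 and interval vector 𝐛: for every A ∈ 𝐀 there exists b ∈ 𝐛 such that Ax = b, x ≥ 0 is solvable, if and only if for every sign vector s ∈ {±1}^m the system b_c − b_Δ ≤ (A_c + diag(s)A_Δ)x ≤ b_c + b_Δ, x ≥ 0 is solvable. -/
open Classical

private lemma row_mulVec_eq {m n : ℕ} (B C : Matrix (Fin m) (Fin n) ℝ)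
    (x : Fin n → ℝ) (i : Fin m) (h : B i = C i) :
    B.mulVec x i = C.mulVec x i := by
  simp [Matrix.mulVec, h]

private lemma row_mulVec_le {m n : ℕ} (B C : Matrix (Fin m) (Fin n) ℝ)
    (x : Fin n → ℝ) (i : Fin m) (hx : ∀ j, 0 ≤ x j) (h : ∀ j, B i j ≤ C i j) :
    B.mulVec x i ≤ C.mulVec x i := by
  simp only [Matrix.mulVec, dotProduct]
  exact Finset.sum_le_sum fun j _ => mul_le_mul_of_nonneg_right (h j) (hx j)

private lemma key_induction {m n : ℕ}
    (Ac AΔ : Matrix (Fin m) (Fin n) ℝ) (bc bΔ : Fin m → ℝ)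
    (hAΔ : ∀ i j, 0 ≤ AΔ i j) (hbΔ : ∀ i, 0 ≤ bΔ i)
    (H : ∀ s : Fin m → ℝ, (∀ i, s i = 1 ∨ s i = -1) →
      ∃ x : Fin n → ℝ, (∀ j, 0 ≤ x j) ∧
        (∀ i, bc i - bΔ i ≤ ((Ac + Matrix.diagonal s * AΔ).mulVec x) i) ∧
        (∀ i, ((Ac + Matrix.diagonal s * AΔ).mulVec x) i ≤ bc i + bΔ i)) :
    ∀ k : ℕ, ∀ A : Matrix (Fin m) (Fin n) ℝ,
      (∀ i j, |A i j - Ac i j| ≤ AΔ i j) →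
      (∀ i : Fin m, k ≤ i.val →
        (∀ j, A i j = Ac i j + AΔ i j) ∨ (∀ j, A i j = Ac i j - AΔ i j)) →
      ∃ x : Fin n → ℝ, (∀ j, 0 ≤ x j) ∧
        (∀ i, bc i - bΔ i ≤ A.mulVec x i) ∧ (∀ i, A.mulVec x i ≤ bc i + bΔ i) := by
  intro k
  induction k with
  | zero =>
    intro A hA hrows
    set s : Fin m → ℝ := fun i =>
      if (∀ j, A i j = Ac i j + AΔ i j) then (1 : ℝ) else -1 with hs
    have hsval : ∀ i, s i = 1 ∨ s i = -1 := by
      intro i; by_cases h : ∀ j, A i j = Ac i j + AΔ i j <;> simp [hs, h]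
    have hEq : Ac + Matrix.diagonal s * AΔ = A := by
      ext i j
      by_cases h : ∀ j, A i j = Ac i j + AΔ i j
      · simp [Matrix.add_apply, Matrix.diagonal_mul, hs, h, h j]
      · rcases hrows i (Nat.zero_le _) with h' | h'
        · exact absurd h' h
        · simp [Matrix.add_apply, Matrix.diagonal_mul, hs, h, h' j]; ring
    obtain ⟨x, hx0, hlo, hhi⟩ := H s hsval
    exact ⟨x, hx0, by rw [← hEq]; exact hlo, by rw [← hEq]; exact hhi⟩
  | succ k ih =>
    intro A hA hrows
    by_cases hk : m ≤ k
    · refine ih A hA fun i hi => absurd hi ?_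
      have := i.isLt; omega
    · push_neg at hk
      set κ : Fin m := ⟨k, hk⟩ with hκ
      set Ap : Matrix (Fin m) (Fin n) ℝ :=
        Function.update A κ (fun j => Ac κ j + AΔ κ j) with hAp
      set Am : Matrix (Fin m) (Fin n) ℝ :=
        Function.update A κ (fun j => Ac κ j - AΔ κ j) with hAm
      have hApκ : Ap κ = fun j => Ac κ j + AΔ κ j := Function.update_self _ _ _
      have hAmκ : Am κ = fun j => Ac κ j - AΔ κ j := Function.update_self _ _ _
      have hApne : ∀ i, i ≠ κ → Ap i = A i := fun i h => Function.update_of_ne h _ _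
      have hAmne : ∀ i, i ≠ κ → Am i = A i := fun i h => Function.update_of_ne h _ _
      have hrowsP : ∀ i : Fin m, k ≤ i.val →
          (∀ j, Ap i j = Ac i j + AΔ i j) ∨ (∀ j, Ap i j = Ac i j - AΔ i j) := by
        intro i hi
        by_cases h : i = κ
        · subst h; left; intro j; rw [hApκ]
        · have : k + 1 ≤ i.val := by
            have : i.val ≠ k := fun hc => h (Fin.ext hc)
            omega
          rcases hrows i this with h' | h'
          · left; intro j; rw [hApne i h]; exact h' j
          · right; intro j; rw [hApne i h]; exact h' j
      have hrowsM : ∀ i : Fin m, k ≤ i.val →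
          (∀ j, Am i j = Ac i j + AΔ i j) ∨ (∀ j, Am i j = Ac i j - AΔ i j) := by
        intro i hi
        by_cases h : i = κ
        · subst h; right; intro j; rw [hAmκ]
        · have : k + 1 ≤ i.val := by
            have : i.val ≠ k := fun hc => h (Fin.ext hc)
            omega
          rcases hrows i this with h' | h'
          · left; intro j; rw [hAmne i h]; exact h' j
          · right; intro j; rw [hAmne i h]; exact h' j
      have hAAp : ∀ i j, |Ap i j - Ac i j| ≤ AΔ i j := by
        intro i j
        by_cases h : i = κ
        · subst h; rw [hApκ]; simp [abs_of_nonneg (hAΔ κ j)]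
        · rw [hApne i h]; exact hA i j
      have hAAm : ∀ i j, |Am i j - Ac i j| ≤ AΔ i j := by
        intro i j
        by_cases h : i = κ
        · subst h; rw [hAmκ]; simp [abs_of_nonneg (hAΔ κ j)]
        · rw [hAmne i h]; exact hA i j
      obtain ⟨xp, hxp0, hploS, hphiS⟩ := ih Ap hAAp hrowsP
      obtain ⟨xm, hxm0, hmloS, hmhiS⟩ := ih Am hAAm hrowsM
      -- bounds for original A's row κ
      have hAleP : ∀ j, A κ j ≤ Ap κ j := by
        intro j; rw [hApκ]
        show A κ j ≤ Ac κ j + AΔ κ j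
        have := abs_le.mp (hA κ j); linarith [this.2]
      have hAgeM : ∀ j, Am κ j ≤ A κ j := by
        intro j; rw [hAmκ]
        show Ac κ j - AΔ κ j ≤ A κ j
        have := abs_le.mp (hA κ j); linarith [this.1]
      have g0lo : bc κ - bΔ κ ≤ A.mulVec xm κ :=
        le_trans (hmloS κ) (row_mulVec_le Am A xm κ hxm0 hAgeM)
      have g1hi : A.mulVec xp κ ≤ bc κ + bΔ κ :=
        le_trans (row_mulVec_le A Ap xp κ hxp0 hAleP) (hphiS κ)
      -- bounds for A at rows ≠ κ
      have hmlo : ∀ i, i ≠ κ → bc i - bΔ i ≤ A.mulVec xm i := by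
        intro i h; rw [← row_mulVec_eq Am A xm i (hAmne i h)]; exact hmloS i
      have hmhi : ∀ i, i ≠ κ → A.mulVec xm i ≤ bc i + bΔ i := by
        intro i h; rw [← row_mulVec_eq Am A xm i (hAmne i h)]; exact hmhiS i
      have hplo : ∀ i, i ≠ κ → bc i - bΔ i ≤ A.mulVec xp i := by
        intro i h; rw [← row_mulVec_eq Ap A xp i (hApne i h)]; exact hploS i
      have hphi : ∀ i, i ≠ κ → A.mulVec xp i ≤ bc i + bΔ i := by
        intro i h; rw [← row_mulVec_eq Ap A xp i (hApne i h)]; exact hphiS i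
      set g0 : ℝ := A.mulVec xm κ with hg0
      set g1 : ℝ := A.mulVec xp κ with hg1
      by_cases hcase : g0 ≤ bc κ + bΔ κ
      · refine ⟨xm, hxm0, ?_, ?_⟩
        · intro i
          by_cases h : i = κ
          · subst h; exact g0lo
          · exact hmlo i h
        · intro i
          by_cases h : i = κ
          · subst h; exact hcase
          · exact hmhi i h
      · push_neg at hcase
        have hg01 : g1 < g0 := lt_of_le_of_lt g1hi hcase
        set lam : ℝ := (g0 - (bc κ + bΔ κ)) / (g0 - g1) with hlam
        have hden : 0 < g0 - g1 := by linarith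
        have hlam0 : 0 ≤ lam := div_nonneg (by linarith) (le_of_lt hden)
        have hlam1 : lam ≤ 1 := by
          rw [hlam, div_le_one hden]; linarith
        set x : Fin n → ℝ := fun j => lam * xp j + (1 - lam) * xm j with hx
        have hx0 : ∀ j, 0 ≤ x j := fun j => by
          have := hxp0 j; have := hxm0 j; rw [hx]
          have h1 : 0 ≤ lam * xp j := mul_nonneg hlam0 (hxp0 j)
          have h2 : 0 ≤ (1 - lam) * xm j := mul_nonneg (by linarith) (hxm0 j)
          simpa using add_nonneg h1 h2
        have hmul : ∀ i, A.mulVec x i = lam * A.mulVec xp i + (1 - lam) * A.mulVec xm i := by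
          intro i
          simp only [hx, Matrix.mulVec, dotProduct]
          rw [Finset.mul_sum, Finset.mul_sum, ← Finset.sum_add_distrib]
          exact Finset.sum_congr rfl fun j _ => by ring
        have hκval : A.mulVec x κ = bc κ + bΔ κ := by
          rw [hmul κ, ← hg1, ← hg0, hlam]
          field_simp
          ring
        refine ⟨x, hx0, ?_, ?_⟩
        · intro i
          by_cases h : i = κ
          · subst h; rw [hκval]; linarith [hbΔ κ]
          · rw [hmul i]
            have h1 := hplo i h; have h2 := hmlo i h
            nlinarith
        · intro i
          by_cases h : i = κ
          · subst h; rw [hκval]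
          · rw [hmul i]
            have h1 := hphi i h; have h2 := hmhi i h
            nlinarith

/-- Tolerable solvability of `𝐀x = 𝐛, x ≥ 0`: for every `A ∈ 𝐀` there is `b ∈ 𝐛`
with `Ax = b, x ≥ 0` solvable, iff for each sign vector `s` the system
`b_c − b_Δ ≤ (A_c + diag(s)A_Δ)x ≤ b_c + b_Δ`, `x ≥ 0`, is solvable. -/
theorem tolerable_solvability_equations_nonneg_iff {m n : ℕ}
    (Ac AΔ : Matrix (Fin m) (Fin n) ℝ) (bc bΔ : Fin m → ℝ)
    (hAΔ : ∀ i j, 0 ≤ AΔ i j) (hbΔ : ∀ i, 0 ≤ bΔ i) :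
    (∀ A : Matrix (Fin m) (Fin n) ℝ, (∀ i j, |A i j - Ac i j| ≤ AΔ i j) →
      ∃ b : Fin m → ℝ, (∀ i, |b i - bc i| ≤ bΔ i) ∧
        ∃ x : Fin n → ℝ, A.mulVec x = b ∧ (∀ j, 0 ≤ x j))
    ↔
    (∀ s : Fin m → ℝ, (∀ i, s i = 1 ∨ s i = -1) →
      ∃ x : Fin n → ℝ, (∀ j, 0 ≤ x j) ∧
        (∀ i, bc i - bΔ i ≤ ((Ac + Matrix.diagonal s * AΔ).mulVec x) i) ∧
        (∀ i, ((Ac + Matrix.diagonal s * AΔ).mulVec x) i ≤ bc i + bΔ i)) := by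
  constructor
  · intro h s hsval
    have hA : ∀ i j, |(Ac + Matrix.diagonal s * AΔ) i j - Ac i j| ≤ AΔ i j := by
      intro i j
      rcases hsval i with h' | h' <;>
        simp [Matrix.add_apply, Matrix.diagonal_mul, h', abs_of_nonneg (hAΔ i j)]
    obtain ⟨b, hb, x, hbx, hx0⟩ := h _ hA
    refine ⟨x, hx0, fun i => ?_, fun i => ?_⟩
    · rw [hbx]; have := abs_le.mp (hb i); linarith [this.1]
    · rw [hbx]; have := abs_le.mp (hb i); linarith [this.2]
  · intro H A hA
    obtain ⟨x, hx0, hlo, hhi⟩ := key_induction Ac AΔ bc bΔ hAΔ hbΔ H m A hA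
      (fun i hi => absurd hi (by have := i.isLt; omega))
    exact ⟨A.mulVec x, fun i => abs_le.mpr ⟨by linarith [hlo i], by linarith [hhi i]⟩,
      x, rfl, hx0⟩
end

section
/- For an interval matrix 𝐀 and interval vector 𝐛: for every b ∈ 𝐛 there exists A ∈ 𝐀 such that Ax = b, x ≥ 0 is solvable, if and only if for every sign vector s ∈ {±1}^m the system (A_c − A_Δ)x ≤ b_c − diag(s)b_Δ ≤ (A_c + A_Δ)x, x ≥ 0 is solvable. -/
private lemma mulVec_combo {m n : ℕ} (M : Matrix (Fin m) (Fin n) ℝ) (t : ℝ)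
    (x y : Fin n → ℝ) (i : Fin m) :
    M.mulVec (fun j => (1 - t) * x j + t * y j) i
      = (1 - t) * (M.mulVec x i) + t * (M.mulVec y i) := by
  simp only [Matrix.mulVec, dotProduct, mul_add, Finset.sum_add_distrib,
    Finset.mul_sum]
  congr 1 <;> exact Finset.sum_congr rfl (fun j _ => by ring)

private lemma aux_ind {m n : ℕ}
    (Ac AΔ : Matrix (Fin m) (Fin n) ℝ) (bc bΔ : Fin m → ℝ)
    (hbΔ : ∀ i, 0 ≤ bΔ i)
    (H : ∀ s : Fin m → ℝ, (∀ i, s i = 1 ∨ s i = -1) →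
      ∃ x : Fin n → ℝ, (∀ j, 0 ≤ x j) ∧
        (∀ i, ((Ac - AΔ).mulVec x) i ≤ bc i - s i * bΔ i) ∧
        (∀ i, bc i - s i * bΔ i ≤ ((Ac + AΔ).mulVec x) i)) :
    ∀ S : Finset (Fin m), ∀ b : Fin m → ℝ, (∀ i, |b i - bc i| ≤ bΔ i) →
      (∀ i ∉ S, b i = bc i - bΔ i ∨ b i = bc i + bΔ i) →
      ∃ x : Fin n → ℝ, (∀ j, 0 ≤ x j) ∧
        ∀ i, ((Ac - AΔ).mulVec x) i ≤ b i ∧ b i ≤ ((Ac + AΔ).mulVec x) i := by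
  intro S
  induction S using Finset.induction_on with
  | empty =>
    intro b hb hend
    set s : Fin m → ℝ := fun i => if b i = bc i - bΔ i then 1 else -1 with hs
    obtain ⟨x, hx, h1, h2⟩ := H s (by
      intro i; by_cases h : b i = bc i - bΔ i <;> simp [hs, h])
    refine ⟨x, hx, fun i => ?_⟩
    have hbi : bc i - s i * bΔ i = b i := by
      by_cases hc : b i = bc i - bΔ i
      · simp [hs, hc]
      · rcases hend i (by simp) with h | h
        · exact absurd h hc
        · simp only [hs, hc, if_false]; rw [h]; ring
    rw [← hbi]; exact ⟨h1 i, h2 i⟩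
  | @insert a S ha ih =>
    intro b hb hend
    have hba := abs_le.mp (hb a)
    set t : ℝ := if bΔ a = 0 then 0 else (b a - (bc a - bΔ a)) / (2 * bΔ a) with ht
    have ht0 : 0 ≤ t := by
      by_cases h : bΔ a = 0
      · simp [ht, h]
      · have hpos : 0 < bΔ a := lt_of_le_of_ne (hbΔ a) (Ne.symm h)
        simp only [ht, h, if_false]
        apply div_nonneg _ (by linarith)
        linarith [hba.1]
    have ht1 : t ≤ 1 := by
      by_cases h : bΔ a = 0
      · simp [ht, h]
      · have hpos : 0 < bΔ a := lt_of_le_of_ne (hbΔ a) (Ne.symm h)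
        simp only [ht, h, if_false]
        rw [div_le_one (by linarith)]
        linarith [hba.2]
    have hkey : (1 - t) * (bc a - bΔ a) + t * (bc a + bΔ a) = b a := by
      by_cases h : bΔ a = 0
      · have : b a = bc a := by
          have := hb a; rw [h] at this
          have := abs_nonpos_iff.mp this; linarith
        simp [ht, h, this]
      · have hpos : 0 < bΔ a := lt_of_le_of_ne (hbΔ a) (Ne.symm h)
        simp only [ht, h, if_false]
        field_simp
        ring
    set bm : Fin m → ℝ := Function.update b a (bc a - bΔ a) with hbm
    set bp : Fin m → ℝ := Function.update b a (bc a + bΔ a) with hbp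
    obtain ⟨x1, hx1, hs1⟩ := ih bm
      (by
        intro i
        by_cases hia : i = a
        · subst hia; simp [hbm, abs_of_nonpos, hbΔ i]
        · simp only [hbm, Function.update_of_ne hia]; exact hb i)
      (by
        intro i hi
        by_cases hia : i = a
        · subst hia; left; simp [hbm]
        · simp only [hbm, Function.update_of_ne hia]
          exact hend i (by simp [hia, hi]))
    obtain ⟨x2, hx2, hs2⟩ := ih bp
      (by
        intro i
        by_cases hia : i = a
        · subst hia; simp [hbp, abs_of_nonneg, hbΔ i]
        · simp only [hbp, Function.update_of_ne hia]; exact hb i)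
      (by
        intro i hi
        by_cases hia : i = a
        · subst hia; right; simp [hbp]
        · simp only [hbp, Function.update_of_ne hia]
          exact hend i (by simp [hia, hi]))
    refine ⟨fun j => (1 - t) * x1 j + t * x2 j, fun j => add_nonneg (mul_nonneg (by linarith) (hx1 j)) (mul_nonneg ht0 (hx2 j)), fun i => ?_⟩
    have hcb : (1 - t) * bm i + t * bp i = b i := by
      by_cases hia : i = a
      · subst hia; simpa [hbm, hbp] using hkey
      · simp only [hbm, hbp, Function.update_of_ne hia]; ring
    rw [mulVec_combo, mulVec_combo, ← hcb]
    constructor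
    · exact add_le_add (mul_le_mul_of_nonneg_left (hs1 i).1 (by linarith))
        (mul_le_mul_of_nonneg_left (hs2 i).1 ht0)
    · exact add_le_add (mul_le_mul_of_nonneg_left (hs1 i).2 (by linarith))
        (mul_le_mul_of_nonneg_left (hs2 i).2 ht0)

/-- Controllable solvability of `𝐀x = 𝐛, x ≥ 0`: for every `b ∈ 𝐛` there is
`A ∈ 𝐀` with `Ax = b, x ≥ 0` solvable, iff for each sign vector `s` the system
`(A_c − A_Δ)x ≤ b_c − diag(s)b_Δ ≤ (A_c + A_Δ)x`, `x ≥ 0`, is solvable. -/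
theorem controllable_solvability_equations_nonneg_iff {m n : ℕ}
    (Ac AΔ : Matrix (Fin m) (Fin n) ℝ) (bc bΔ : Fin m → ℝ)
    (hAΔ : ∀ i j, 0 ≤ AΔ i j) (hbΔ : ∀ i, 0 ≤ bΔ i) :
    (∀ b : Fin m → ℝ, (∀ i, |b i - bc i| ≤ bΔ i) →
      ∃ A : Matrix (Fin m) (Fin n) ℝ, (∀ i j, |A i j - Ac i j| ≤ AΔ i j) ∧
        ∃ x : Fin n → ℝ, A.mulVec x = b ∧ (∀ j, 0 ≤ x j))
    ↔
    (∀ s : Fin m → ℝ, (∀ i, s i = 1 ∨ s i = -1) →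
      ∃ x : Fin n → ℝ, (∀ j, 0 ≤ x j) ∧
        (∀ i, ((Ac - AΔ).mulVec x) i ≤ bc i - s i * bΔ i) ∧
        (∀ i, bc i - s i * bΔ i ≤ ((Ac + AΔ).mulVec x) i)) := by
  constructor
  · intro H s hs
    obtain ⟨A, hA, x, hAx, hx⟩ := H (fun i => bc i - s i * bΔ i) (by
      intro i
      have heq : bc i - s i * bΔ i - bc i = -(s i * bΔ i) := by ring
      rw [heq, abs_neg, abs_mul, abs_of_nonneg (hbΔ i)]
      rcases hs i with h | h <;> simp [h])
    refine ⟨x, hx, fun i => ?_, fun i => ?_⟩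
    · rw [← congrFun hAx i]
      simp only [Matrix.mulVec, dotProduct, Matrix.sub_apply]
      exact Finset.sum_le_sum fun j _ =>
        mul_le_mul_of_nonneg_right (by linarith [(abs_le.mp (hA i j)).1]) (hx j)
    · rw [← congrFun hAx i]
      simp only [Matrix.mulVec, dotProduct, Matrix.add_apply]
      exact Finset.sum_le_sum fun j _ =>
        mul_le_mul_of_nonneg_right (by linarith [(abs_le.mp (hA i j)).2]) (hx j)
  · intro H b hb
    obtain ⟨x, hx, hsw⟩ := aux_ind Ac AΔ bc bΔ hbΔ H Finset.univ b hb
      (fun i hi => absurd (Finset.mem_univ i) hi)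
    have hp : ∀ i, 0 ≤ (AΔ.mulVec x) i := by
      intro i
      simp only [Matrix.mulVec, dotProduct]
      exact Finset.sum_nonneg fun j _ => mul_nonneg (hAΔ i j) (hx j)
    have hsand : ∀ i, |b i - (Ac.mulVec x) i| ≤ (AΔ.mulVec x) i := by
      intro i
      have h1 := (hsw i).1
      have h2 := (hsw i).2
      rw [Matrix.sub_mulVec] at h1
      rw [Matrix.add_mulVec] at h2
      simp only [Pi.sub_apply, Pi.add_apply] at h1 h2
      rw [abs_le]; constructor <;> linarith
    set t : Fin m → ℝ := fun i => if (AΔ.mulVec x) i = 0 then 0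
      else (b i - (Ac.mulVec x) i) / (AΔ.mulVec x) i with htdef
    have habs : ∀ i, |t i| ≤ 1 := by
      intro i
      by_cases h : (AΔ.mulVec x) i = 0
      · simp [htdef, h]
      · have hpos : 0 < (AΔ.mulVec x) i := lt_of_le_of_ne (hp i) (Ne.symm h)
        simp only [htdef, h, if_false, abs_div, abs_of_pos hpos]
        rw [div_le_one hpos]
        exact hsand i
    refine ⟨Matrix.of fun i j => Ac i j + t i * AΔ i j, fun i j => ?_, x, ?_, hx⟩
    · simp only [Matrix.of_apply, add_sub_cancel_left, abs_mul, abs_of_nonneg (hAΔ i j)]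
      calc |t i| * AΔ i j ≤ 1 * AΔ i j :=
            mul_le_mul_of_nonneg_right (habs i) (hAΔ i j)
        _ = AΔ i j := one_mul _
    · funext i
      have hexp : (Matrix.of fun i j => Ac i j + t i * AΔ i j).mulVec x i
          = (Ac.mulVec x) i + t i * (AΔ.mulVec x) i := by
        simp only [Matrix.mulVec, dotProduct, Matrix.of_apply, add_mul,
          Finset.sum_add_distrib, Finset.mul_sum]
        congr 1
        exact Finset.sum_congr rfl fun j _ => by ring
      rw [hexp]
      by_cases h : (AΔ.mulVec x) i = 0
      · have := hsand i; rw [h] at this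
        have := abs_nonpos_iff.mp this
        simp [htdef, h]; linarith
      · simp only [htdef, h, if_false]
        rw [div_mul_cancel₀ _ h]; ring
end
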